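/- arXiv:2303.04127 — 2 statements merged into one kernel-verified Lean document; each statement's English description precedes it below -/
import Mathlib

section
/- Under the ergodic environment assumption and the quenched weak-convergence assumption, for Q-almost every ω ∈ Ω the following holds: for every compact set A ⊂ ℝ^d and every bounded uniformly continuous function G : E → ℝ, one has (1/n^d) · Σ_{x ∈ ℤ^d} 1_A(x/n) · 1_{Ω₀}(τ_x ω) · | ∫_E G(T_{x/n} z) dμ_n^{τ_x ω}(z) − ∫_E G(T_{x/n} z) dP(z) | → 0 as n → ∞. -/
/-!
Finitely many bounded continuous test functions control the Lévy–Prokhorov distance to `P`, and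
Lévy–Prokhorov closeness controls the integrals of the uniformly equicontinuous family
`G ∘ T_v` uniformly in `v`. So a site `x` contributes at most `s` unless `τ_x ω` lies in the
deviation set of these test functions at time `n`, and at most `2M` in any case. By quenched weak
convergence almost every point lies in the deviation sets only finitely often, so the points
deviating at some time `≥ N` form sets whose measure tends to `0`. The maximal inequality for
the `ℤ^d`-action, proved with a Vitali covering of lattice cubes, turns this into: almost surely,
for `N` large, these sets are visited with small density in every cube around the origin,
whatever its size; this bounds the proportion of bad sites in a box of side of order `n`.
-/

open MeasureTheory Filter Topology ProbabilityTheory Metric Finset BoundedContinuousFunction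

section LatticeCube

variable {d : ℕ}

noncomputable def latticeCube (c : Fin d → ℤ) (m : ℕ) : Finset (Fin d → ℤ) :=
  Finset.Icc (c - fun _ => (m : ℤ)) (c + fun _ => (m : ℤ))

lemma mem_latticeCube {c x : Fin d → ℤ} {m : ℕ} : x ∈ latticeCube c m ↔ dist x c ≤ m := by
  simp only [latticeCube, Finset.mem_Icc, Pi.le_def, dist_pi_le_iff (Nat.cast_nonneg m),
    Int.dist_eq, ← forall_and, abs_le]
  refine forall_congr' fun i => ?_
  rw [show (x i : ℝ) - c i = ((x i - c i : ℤ) : ℝ) by push_cast; ring,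
    show (m : ℝ) = ((m : ℤ) : ℝ) by norm_cast, ← Int.cast_neg, Int.cast_le, Int.cast_le]
  simp only [Pi.sub_apply, Pi.add_apply]
  omega

lemma self_mem_latticeCube (c : Fin d → ℤ) (m : ℕ) : c ∈ latticeCube c m := by
  simp [mem_latticeCube]

lemma mem_latticeCube_comm {c x : Fin d → ℤ} {m : ℕ} :
    x ∈ latticeCube c m ↔ c ∈ latticeCube x m := by
  rw [mem_latticeCube, mem_latticeCube, dist_comm]

lemma mem_latticeCube_add {x y c : Fin d → ℤ} {a b : ℕ} (hx : x ∈ latticeCube y a)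
    (hy : y ∈ latticeCube c b) : x ∈ latticeCube c (a + b) := by
  rw [mem_latticeCube] at hx hy ⊢
  push_cast
  linarith [dist_triangle x y c]

lemma latticeCube_mono (c : Fin d → ℤ) {m m' : ℕ} (h : m ≤ m') :
    latticeCube c m ⊆ latticeCube c m' := fun x hx =>
  mem_latticeCube.2 ((mem_latticeCube.1 hx).trans (by exact_mod_cast h))

lemma card_latticeCube (c : Fin d → ℤ) (m : ℕ) : #(latticeCube c m) = (2 * m + 1) ^ d := by
  have hside : ∀ i, (c i + m + 1 - (c i - m)).toNat = 2 * m + 1 := fun i => by omega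
  simp [latticeCube, Pi.card_Icc, Int.card_Icc, hside]

lemma card_latticeCube_three_mul_le (c : Fin d → ℤ) (m : ℕ) :
    #(latticeCube c (3 * m)) ≤ 3 ^ d * #(latticeCube c m) := by
  rw [card_latticeCube, card_latticeCube, ← mul_pow]
  exact Nat.pow_le_pow_left (by omega) d

lemma latticeCube_eq_map_addRight (c : Fin d → ℤ) (m : ℕ) :
    latticeCube c m = (latticeCube 0 m).map (addRightEmbedding c) := by
  ext x
  simp only [Finset.mem_map, addRightEmbedding_apply, mem_latticeCube]
  refine ⟨fun h => ⟨x - c, by simpa [dist_eq_norm] using h, sub_add_cancel x c⟩, ?_⟩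
  rintro ⟨y, hy, rfl⟩
  simpa [dist_eq_norm] using hy

lemma le_of_forall_card_latticeCube_mul_le {a b : ℝ} (L : ℕ)
    (h : ∀ K : ℕ,
      #(latticeCube (0 : Fin d → ℤ) K) * a ≤ #(latticeCube (0 : Fin d → ℤ) (K + L)) * b) :
    a ≤ b := by
  have hratio : Tendsto (fun K : ℕ => ((2 * ((K + L : ℕ) : ℝ) + 1) / (2 * K + 1)) ^ d * b)
      atTop (𝓝 b) := by
    have h1 : Tendsto (fun K : ℕ => 1 + (2 * L : ℝ) * (2 * (K : ℝ) + 1)⁻¹) atTop (𝓝 1) := by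
      simpa using (tendsto_inv_atTop_zero.comp (tendsto_atTop_add_const_right _ 1
        ((tendsto_natCast_atTop_atTop (R := ℝ)).const_mul_atTop two_pos))).const_mul (2 * L : ℝ)
        |>.const_add 1
    have h2 : (fun K : ℕ => 1 + (2 * L : ℝ) * (2 * (K : ℝ) + 1)⁻¹)
        = fun K : ℕ => (2 * ((K + L : ℕ) : ℝ) + 1) / (2 * K + 1) := by
      ext K
      field_simp
      push_cast
      ring
    rw [h2] at h1
    simpa only [one_pow, one_mul] using (h1.pow d).mul_const b
  refine le_of_tendsto_of_tendsto' tendsto_const_nhds hratio fun K => ?_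
  have hK := h K
  simp only [card_latticeCube] at hK
  push_cast at hK ⊢
  rw [div_pow, div_mul_eq_mul_div, le_div_iff₀ (by positivity)]
  linarith

end LatticeCube

section Covering

variable {d : ℕ}

open Classical in
lemma mul_card_le_three_pow_mul_card_filter {p : (Fin d → ℤ) → Prop} {lam : ℝ} (hlam : 0 ≤ lam)
    {B : Finset (Fin d → ℤ)} {K L : ℕ} (hB : B ⊆ latticeCube 0 K)
    (hdense : ∀ x ∈ B, ∃ m ≤ L, lam * #(latticeCube x m) ≤ #{y ∈ latticeCube x m | p y}) :
    lam * #B ≤ 3 ^ d * #{y ∈ latticeCube 0 (K + L) | p y} := by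
  choose! w hwL hw using hdense
  obtain ⟨u, huB, hu_disj, hu_cover⟩ := Vitali.exists_disjoint_subfamily_covering_enlargement
    (fun x => (latticeCube x (w x) : Set (Fin d → ℤ))) B (fun x => w x) 2 one_lt_two
    (fun _ _ => Nat.cast_nonneg _) L (fun x hx => by exact_mod_cast hwL x hx)
    (fun x _ => ⟨x, self_mem_latticeCube x (w x)⟩)
  set sel := {c ∈ B | c ∈ u}
  have hsel_disj : (sel : Set _).PairwiseDisjoint fun c => latticeCube c (w c) :=
    fun a ha b hb hab => Finset.disjoint_coe.1 <|
      hu_disj (Finset.mem_filter.1 ha).2 (Finset.mem_filter.1 hb).2 hab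
  have hcover : B ⊆ sel.biUnion fun c => latticeCube c (3 * w c) := by
    intro x hx
    obtain ⟨c, hcu, ⟨y, hyx, hyc⟩, hwc⟩ := hu_cover x hx
    have hwc : w x ≤ 2 * w c := by exact_mod_cast hwc
    refine Finset.mem_biUnion.2 ⟨c, Finset.mem_filter.2 ⟨huB hcu, hcu⟩, ?_⟩
    exact latticeCube_mono c (by omega) (mem_latticeCube_add (mem_latticeCube_comm.1 hyx) hyc)
  have hinside : sel.biUnion (fun c => latticeCube c (w c)) ⊆ latticeCube 0 (K + L) := by
    intro y hy
    obtain ⟨c, hc, hyc⟩ := Finset.mem_biUnion.1 hy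
    have hcB := (Finset.mem_filter.1 hc).1
    exact latticeCube_mono 0 (by have := hwL c hcB; omega) (mem_latticeCube_add hyc (hB hcB))
  calc lam * #B ≤ lam * ∑ c ∈ sel, (#(latticeCube c (3 * w c)) : ℝ) := by
        gcongr
        exact_mod_cast (Finset.card_le_card hcover).trans Finset.card_biUnion_le
    _ ≤ lam * ∑ c ∈ sel, (3 : ℝ) ^ d * #(latticeCube c (w c)) := by
        gcongr with c
        exact_mod_cast card_latticeCube_three_mul_le c (w c)
    _ = 3 ^ d * ∑ c ∈ sel, lam * #(latticeCube c (w c)) := by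
        rw [Finset.mul_sum, Finset.mul_sum]
        exact Finset.sum_congr rfl fun c _ => by ring
    _ ≤ 3 ^ d * ∑ c ∈ sel, (#{y ∈ latticeCube c (w c) | p y} : ℝ) := by
        gcongr with c hc
        exact hw c (Finset.mem_filter.1 hc).1
    _ ≤ 3 ^ d * #{y ∈ latticeCube 0 (K + L) | p y} := by
        gcongr
        rw [← Nat.cast_sum, ← Finset.card_biUnion, ← Finset.filter_biUnion]
        · exact_mod_cast Finset.card_le_card (Finset.filter_subset_filter _ hinside)
        · exact hsel_disj.mono fun c => Finset.filter_subset _ _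

end Covering

section MaximalInequality

open Classical

variable {d : ℕ} {Ω : Type*} {τ : (Fin d → ℤ) → Ω → Ω}

lemma card_filter_latticeCube_zero_comp (hτ_add : ∀ z w, τ (z + w) = τ z ∘ τ w) (S : Set Ω)
    (x : Fin d → ℤ) (m : ℕ) (ω : Ω) :
    #{y ∈ latticeCube 0 m | τ y (τ x ω) ∈ S} = #{y ∈ latticeCube x m | τ y ω ∈ S} := by
  rw [latticeCube_eq_map_addRight x, Finset.filter_map, Finset.card_map]
  simp [hτ_add]

def denseWindowSet (τ : (Fin d → ℤ) → Ω → Ω) (S : Set Ω) (lam : ℝ) (L : ℕ) : Set Ω :=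
  {ω | ∃ m ≤ L, lam * #(latticeCube (0 : Fin d → ℤ) m) ≤ #{y ∈ latticeCube 0 m | τ y ω ∈ S}}

lemma mul_card_filter_denseWindowSet_le (hτ_add : ∀ z w, τ (z + w) = τ z ∘ τ w) (S : Set Ω)
    {lam : ℝ} (hlam : 0 ≤ lam) (K L : ℕ) (ω : Ω) :
    lam * #{x ∈ latticeCube 0 K | τ x ω ∈ denseWindowSet τ S lam L}
      ≤ 3 ^ d * #{y ∈ latticeCube 0 (K + L) | τ y ω ∈ S} := by
  refine mul_card_le_three_pow_mul_card_filter hlam (Finset.filter_subset _ _) fun x hx => ?_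
  obtain ⟨m, hmL, hm⟩ := (Finset.mem_filter.1 hx).2
  refine ⟨m, hmL, ?_⟩
  rwa [card_filter_latticeCube_zero_comp hτ_add, card_latticeCube, ← card_latticeCube x] at hm

lemma natCast_card_filter_eq_sum_indicator (C : Finset (Fin d → ℤ)) (S : Set Ω) :
    (fun ω => (#{x ∈ C | τ x ω ∈ S} : ℝ)) = fun ω => ∑ x ∈ C, (τ x ⁻¹' S).indicator 1 ω := by
  ext ω
  rw [Finset.natCast_card_filter]
  simp only [Set.indicator_apply, Set.mem_preimage, Pi.one_apply]

variable [MeasurableSpace Ω] {Q : Measure Ω}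

lemma measurable_card_filter (hτ_pres : ∀ z, MeasurePreserving (τ z) Q Q) {S : Set Ω}
    (hS : MeasurableSet S) (C : Finset (Fin d → ℤ)) :
    Measurable fun ω => (#{x ∈ C | τ x ω ∈ S} : ℝ) := by
  rw [natCast_card_filter_eq_sum_indicator]
  exact Finset.measurable_sum _ fun x _ => measurable_const.indicator ((hτ_pres x).measurable hS)

lemma integrable_card_filter [IsFiniteMeasure Q] (hτ_pres : ∀ z, MeasurePreserving (τ z) Q Q)
    {S : Set Ω} (hS : MeasurableSet S) (C : Finset (Fin d → ℤ)) :
    Integrable (fun ω => (#{x ∈ C | τ x ω ∈ S} : ℝ)) Q := by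
  rw [natCast_card_filter_eq_sum_indicator]
  exact integrable_finsetSum _ fun x _ =>
    (integrable_const 1).indicator ((hτ_pres x).measurable hS)

lemma integral_card_filter [IsFiniteMeasure Q] (hτ_pres : ∀ z, MeasurePreserving (τ z) Q Q)
    {S : Set Ω} (hS : MeasurableSet S) (C : Finset (Fin d → ℤ)) :
    ∫ ω, (#{x ∈ C | τ x ω ∈ S} : ℝ) ∂Q = #C * Q.real S := by
  have hpre : ∀ x, MeasurableSet (τ x ⁻¹' S) := fun x => (hτ_pres x).measurable hS
  rw [natCast_card_filter_eq_sum_indicator,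
    integral_finsetSum _ fun x _ => (integrable_const 1).indicator (hpre x)]
  simp_rw [integral_indicator_one (hpre _), measureReal_def,
    (hτ_pres _).measure_preimage hS.nullMeasurableSet]
  simp

lemma measurableSet_denseWindowSet (hτ_pres : ∀ z, MeasurePreserving (τ z) Q Q) {S : Set Ω}
    (hS : MeasurableSet S) (lam : ℝ) (L : ℕ) : MeasurableSet (denseWindowSet τ S lam L) := by
  simp only [denseWindowSet, Set.ofPred_exists, Set.ofPred_and]
  exact .iUnion fun m => (MeasurableSet.const _).inter <|
    measurableSet_le measurable_const (measurable_card_filter hτ_pres hS _)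

lemma mul_measureReal_denseWindowSet_le [IsFiniteMeasure Q]
    (hτ_add : ∀ z w, τ (z + w) = τ z ∘ τ w) (hτ_pres : ∀ z, MeasurePreserving (τ z) Q Q)
    {S : Set Ω} (hS : MeasurableSet S) {lam : ℝ} (hlam : 0 ≤ lam) (L : ℕ) :
    lam * Q.real (denseWindowSet τ S lam L) ≤ 3 ^ d * Q.real S := by
  have hD := measurableSet_denseWindowSet hτ_pres hS lam L
  refine le_of_forall_card_latticeCube_mul_le (d := d) L fun K => ?_
  calc (#(latticeCube (0 : Fin d → ℤ) K) : ℝ) * (lam * Q.real (denseWindowSet τ S lam L))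
      = ∫ ω, lam * #{x ∈ latticeCube 0 K | τ x ω ∈ denseWindowSet τ S lam L} ∂Q := by
        rw [integral_const_mul, integral_card_filter hτ_pres hD]; ring
    _ ≤ ∫ ω, 3 ^ d * (#{y ∈ latticeCube 0 (K + L) | τ y ω ∈ S} : ℝ) ∂Q :=
        integral_mono ((integrable_card_filter hτ_pres hD _).const_mul lam)
          ((integrable_card_filter hτ_pres hS _).const_mul _)
          fun ω => mul_card_filter_denseWindowSet_le hτ_add S hlam K L ω
    _ = #(latticeCube (0 : Fin d → ℤ) (K + L)) * (3 ^ d * Q.real S) := by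
        rw [integral_const_mul, integral_card_filter hτ_pres hS]; ring

theorem measure_setOf_exists_mul_card_le_card_filter_le [IsFiniteMeasure Q]
    (hτ_add : ∀ z w, τ (z + w) = τ z ∘ τ w) (hτ_pres : ∀ z, MeasurePreserving (τ z) Q Q)
    {S : Set Ω} (hS : MeasurableSet S) {lam : ℝ} (hlam : 0 < lam) :
    Q {ω | ∃ m, lam * #(latticeCube (0 : Fin d → ℤ) m) ≤ #{y ∈ latticeCube 0 m | τ y ω ∈ S}}
      ≤ ENNReal.ofReal (3 ^ d / lam) * Q S := by
  have hunion : {ω | ∃ m, lam * #(latticeCube (0 : Fin d → ℤ) m) ≤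
      #{y ∈ latticeCube 0 m | τ y ω ∈ S}} = ⋃ L, denseWindowSet τ S lam L := by
    ext ω
    simp only [denseWindowSet, Set.mem_ofPred_eq, Set.mem_iUnion]
    exact ⟨fun ⟨m, hm⟩ => ⟨m, m, le_rfl, hm⟩, fun ⟨_, m, _, hm⟩ => ⟨m, hm⟩⟩
  have hmono : Monotone (denseWindowSet τ S lam) :=
    fun L L' hL _ ⟨m, hmL, hm⟩ => ⟨m, hmL.trans hL, hm⟩
  rw [hunion, hmono.measure_iUnion, ← ofReal_measureReal (measure_ne_top Q S),
    ← ENNReal.ofReal_mul (by positivity)]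
  refine iSup_le fun L => ?_
  rw [← ofReal_measureReal (measure_ne_top Q _)]
  refine ENNReal.ofReal_le_ofReal ?_
  rw [div_mul_eq_mul_div, le_div_iff₀ hlam, mul_comm]
  exact mul_measureReal_denseWindowSet_le hτ_add hτ_pres hS hlam.le L

theorem ae_forall_exists_forall_card_filter_lt [IsFiniteMeasure Q]
    (hτ_add : ∀ z w, τ (z + w) = τ z ∘ τ w) (hτ_pres : ∀ z, MeasurePreserving (τ z) Q Q)
    {S : ℕ → Set Ω} (hS : ∀ N, MeasurableSet (S N))
    (hS_lim : Tendsto (fun N => Q (S N)) atTop (𝓝 0)) :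
    ∀ᵐ ω ∂Q, ∀ r > 0, ∃ N, ∀ m,
      (#{y ∈ latticeCube 0 m | τ y ω ∈ S N} : ℝ) < r * #(latticeCube (0 : Fin d → ℤ) m) := by
  have key : ∀ k : ℕ, ∀ᵐ ω ∂Q, ∃ N, ∀ m,
      (#{y ∈ latticeCube 0 m | τ y ω ∈ S N} : ℝ) <
        1 / (k + 1) * #(latticeCube (0 : Fin d → ℤ) m) := by
    intro k
    have hnull : Q (⋂ N, {ω | ∃ m, 1 / ((k : ℝ) + 1) * #(latticeCube (0 : Fin d → ℤ) m) ≤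
        #{y ∈ latticeCube 0 m | τ y ω ∈ S N}}) = 0 := by
      have hlim := ENNReal.Tendsto.const_mul hS_lim
        (Or.inr (ENNReal.ofReal_ne_top (r := 3 ^ d / (1 / ((k : ℝ) + 1)))))
      rw [mul_zero] at hlim
      refine le_antisymm (ge_of_tendsto' hlim fun N => ?_) bot_le
      exact (measure_mono (Set.iInter_subset _ N)).trans <|
        measure_setOf_exists_mul_card_le_card_filter_le hτ_add hτ_pres (hS N) (by positivity)
    filter_upwards [measure_eq_zero_iff_ae_notMem.1 hnull] with ω hω
    simpa only [Set.mem_iInter, Set.mem_ofPred_eq, not_forall, not_exists, not_le] using hω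
  filter_upwards [ae_all_iff.2 key] with ω hω r hr
  obtain ⟨k, hk⟩ := exists_nat_one_div_lt hr
  obtain ⟨N, hN⟩ := hω k
  exact ⟨N, fun m => (hN m).trans_le (by gcongr)⟩

theorem ae_forall_eventually_forall_card_filter_lt [IsFiniteMeasure Q]
    (hτ_add : ∀ z w, τ (z + w) = τ z ∘ τ w) (hτ_pres : ∀ z, MeasurePreserving (τ z) Q Q)
    {B : ℕ → Set Ω} (hB : ∀ n, MeasurableSet (B n)) (hB_ev : ∀ᵐ ω ∂Q, ∀ᶠ n in atTop, ω ∉ B n) :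
    ∀ᵐ ω ∂Q, ∀ r > 0, ∀ᶠ n in atTop, ∀ m,
      (#{y ∈ latticeCube 0 m | τ y ω ∈ B n} : ℝ) < r * #(latticeCube (0 : Fin d → ℤ) m) := by
  set S : ℕ → Set Ω := fun N => ⋃ n ≥ N, B n
  have hS : ∀ N, MeasurableSet (S N) := fun N => .biUnion (Set.to_countable _) fun n _ => hB n
  have hS_anti : Antitone S := fun N N' hN =>
    Set.biUnion_mono (fun n hn => hN.trans hn) fun _ _ => le_rfl
  have hS_null : Q (⋂ N, S N) = 0 := by
    rw [measure_eq_zero_iff_ae_notMem]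
    filter_upwards [hB_ev] with ω hω hmem
    obtain ⟨N, hN⟩ := eventually_atTop.1 hω
    obtain ⟨n, hn, hωn⟩ := Set.mem_iUnion₂.1 (Set.mem_iInter.1 hmem N)
    exact hN n hn hωn
  have hS_lim := tendsto_measure_iInter_atTop (fun N => (hS N).nullMeasurableSet) hS_anti
    ⟨0, measure_ne_top Q _⟩
  rw [hS_null] at hS_lim
  filter_upwards [ae_forall_exists_forall_card_filter_lt hτ_add hτ_pres hS hS_lim] with ω hω r hr
  obtain ⟨N, hN⟩ := hω r hr
  refine eventually_atTop.2 ⟨N, fun n hn m => lt_of_le_of_lt ?_ (hN m)⟩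
  refine Nat.cast_le.2 (Finset.card_le_card fun y hy => ?_)
  rw [Finset.mem_filter] at hy ⊢
  exact ⟨hy.1, Set.mem_biUnion hn hy.2⟩

end MaximalInequality

section Equicontinuity

variable {ι α β γ : Type*}

lemma UniformContinuous.comp_uniformEquicontinuous [UniformSpace α] [UniformSpace β]
    [UniformSpace γ] {g : α → γ} (hg : UniformContinuous g) {F : ι → β → α}
    (hF : UniformEquicontinuous F) : UniformEquicontinuous fun i => g ∘ F i := by
  rw [uniformEquicontinuous_iff_uniformContinuous] at hF ⊢
  exact (UniformFun.postcomp_uniformContinuous hg).comp hF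

lemma uniformEquicontinuous_of_isometry [PseudoMetricSpace α] [PseudoMetricSpace β]
    {F : ι → β → α} (hF : ∀ i, Isometry (F i)) : UniformEquicontinuous F :=
  Metric.uniformEquicontinuous_iff.2 fun ε hε =>
    ⟨ε, hε, fun x y hxy i => (hF i).dist_eq x y ▸ hxy⟩

end Equicontinuity

section WeakConvergence

variable {E : Type*} [MeasurableSpace E]

lemma ProbabilityMeasure.exists_finset_forall_abs_integral_sub_le_imp_mem [TopologicalSpace E]
    [OpensMeasurableSpace E] {P : ProbabilityMeasure E} {U : Set (ProbabilityMeasure E)}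
    (hU : U ∈ 𝓝 P) :
    ∃ (J : Finset (E →ᵇ ℝ)) (δ : ℝ), 0 < δ ∧ ∀ ν : ProbabilityMeasure E,
      (∀ g ∈ J, |∫ x, g x ∂(ν : Measure E) - ∫ x, g x ∂(P : Measure E)| ≤ δ) → ν ∈ U := by
  have hbasis := Filter.HasBasis.iInf' fun g : E →ᵇ ℝ =>
    (Metric.nhds_basis_closedBall (x := ∫ x, g x ∂(P : Measure E))).comap
      fun ν : ProbabilityMeasure E => ∫ x, g x ∂(ν : Measure E)
  have hle : (⨅ g : E →ᵇ ℝ, comap (fun ν : ProbabilityMeasure E => ∫ x, g x ∂(ν : Measure E))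
      (𝓝 (∫ x, g x ∂(P : Measure E)))) ≤ 𝓝 P :=
    tendsto_id'.1 (ProbabilityMeasure.tendsto_iff_forall_integral_tendsto.2 fun g =>
      tendsto_iInf' g tendsto_comap)
  obtain ⟨⟨I, r⟩, ⟨hI, hr⟩, hIU⟩ := hbasis.mem_iff.1 (hle hU)
  obtain ⟨δ, hδr, hδ⟩ := (((eventually_all_finite hI).2 fun g hg =>
    eventually_nhdsWithin_of_eventually_nhds (eventually_le_nhds (hr g hg))).and
    (self_mem_nhdsWithin (s := Set.Ioi (0 : ℝ)))).exists
  refine ⟨hI.toFinset, δ, hδ, fun ν hν => hIU (Set.mem_iInter₂.2 fun g hg => ?_)⟩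
  rw [Set.mem_preimage, mem_closedBall, Real.dist_eq]
  exact (hν g (hI.mem_toFinset.2 hg)).trans (hδr g hg)

lemma exists_finset_forall_abs_integral_sub_le_imp_levyProkhorovEDist_lt [PseudoMetricSpace E]
    [TopologicalSpace.SeparableSpace E] [OpensMeasurableSpace E] (P : Measure E)
    [IsProbabilityMeasure P] {η : ℝ} (hη : 0 < η) :
    ∃ (J : Finset (E →ᵇ ℝ)) (δ : ℝ), 0 < δ ∧ ∀ (ν : Measure E) [IsProbabilityMeasure ν],
      (∀ g ∈ J, |∫ x, g x ∂ν - ∫ x, g x ∂P| ≤ δ) → levyProkhorovEDist ν P < ENNReal.ofReal η := by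
  have hU := LevyProkhorov.continuous_ofMeasure_probabilityMeasure.continuousAt.preimage_mem_nhds
    (Metric.eball_mem_nhds (LevyProkhorov.ofMeasure (α := ProbabilityMeasure E) ⟨P, ‹_›⟩)
      (ENNReal.ofReal_pos.2 hη))
  obtain ⟨J, δ, hδ, hJ⟩ := ProbabilityMeasure.exists_finset_forall_abs_integral_sub_le_imp_mem hU
  exact ⟨J, δ, hδ, fun ν _ hν => hJ ⟨ν, ‹_›⟩ hν⟩

lemma abs_integral_sub_integral_le_two_mul {ν P : Measure E} [IsProbabilityMeasure ν]
    [IsProbabilityMeasure P] {f : E → ℝ} {M : ℝ} (hf : ∀ x, |f x| ≤ M) :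
    |∫ x, f x ∂ν - ∫ x, f x ∂P| ≤ 2 * M := by
  have hbound : ∀ μ : Measure E, IsProbabilityMeasure μ → |∫ x, f x ∂μ| ≤ M := fun μ _ => by
    simpa using norm_integral_le_of_norm_le_const (μ := μ)
      (ae_of_all _ fun x => (Real.norm_eq_abs _).trans_le (hf x))
  linarith [abs_sub (∫ x, f x ∂ν) (∫ x, f x ∂P), hbound ν ‹_›, hbound P ‹_›]

section Deviation

variable {Ω : Type*} [MeasurableSpace Ω] [TopologicalSpace E]

def deviationSet (κ : Kernel Ω E) (P : Measure E) (J : Finset (E →ᵇ ℝ)) (δ : ℝ) : Set Ω :=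
  ⋃ g ∈ J, {ω | δ < |∫ x, g x ∂(κ ω) - ∫ x, g x ∂P|}

lemma notMem_deviationSet {κ : Kernel Ω E} {P : Measure E} {J : Finset (E →ᵇ ℝ)} {δ : ℝ}
    {ω : Ω} : ω ∉ deviationSet κ P J δ ↔ ∀ g ∈ J, |∫ x, g x ∂(κ ω) - ∫ x, g x ∂P| ≤ δ := by
  simp [deviationSet]

lemma measurableSet_deviationSet [OpensMeasurableSpace E] (κ : Kernel Ω E) (P : Measure E)
    (J : Finset (E →ᵇ ℝ)) (δ : ℝ) : MeasurableSet (deviationSet κ P J δ) :=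
  Finset.measurableSet_biUnion _ fun g _ => measurableSet_lt measurable_const
    ((g.continuous.measurable.stronglyMeasurable.integral_kernel (κ := κ)).measurable.sub_const
      _).abs

lemma eventually_notMem_deviationSet {κ : ℕ → Kernel Ω E} {P : Measure E} {ω : Ω}
    (hκ : ∀ g : E →ᵇ ℝ, Tendsto (fun n => ∫ x, g x ∂(κ n ω)) atTop (𝓝 (∫ x, g x ∂P)))
    (J : Finset (E →ᵇ ℝ)) {δ : ℝ} (hδ : 0 < δ) :
    ∀ᶠ n in atTop, ω ∉ deviationSet (κ n) P J δ := by
  simp_rw [notMem_deviationSet]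
  exact (eventually_all_finset J).2 fun g _ =>
    (Metric.tendsto_nhds.1 (hκ g) δ hδ).mono fun _ hn => (Real.dist_eq _ _ ▸ hn).le

end Deviation

variable [PseudoMetricSpace E] [OpensMeasurableSpace E]

lemma integrableOn_Ioc_of_antitone {φ : ℝ → ℝ} (hφ : Antitone φ) (a b : ℝ) :
    IntegrableOn φ (Set.Ioc a b) :=
  (hφ.locallyIntegrable.integrableOn_isCompact isCompact_Icc).mono_set Set.Ioc_subset_Icc_self

lemma BoundedContinuousFunction.integral_le_integral_add_of_levyProkhorovEDist_lt
    (ν P : Measure E) [IsFiniteMeasure ν] [IsProbabilityMeasure P] (f : E →ᵇ ℝ)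
    (hf : ∀ x, 0 ≤ f x) {ε η : ℝ} (hε : 0 < ε) (hη : 0 ≤ η)
    (hmod : ∀ x y, dist x y < ε → f y ≤ f x + η)
    (hνP : levyProkhorovEDist ν P < ENNReal.ofReal ε) :
    ∫ x, f x ∂ν ≤ ∫ x, f x ∂P + η + ε * ‖f‖ := by
  set g := f + BoundedContinuousFunction.const E η
  have hg : ∀ x, g x = f x + η := fun x => rfl
  have hg0 : ∀ x, 0 ≤ g x := fun x => by rw [hg]; linarith [hf x]
  have hfg : ‖f‖ ≤ ‖g‖ := (norm_le (norm_nonneg _)).2 fun x => by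
    rw [Real.norm_eq_abs, abs_of_nonneg (hf x)]
    refine le_trans ?_ ((le_abs_self (g x)).trans (g.norm_coe_le_norm x))
    linarith [hg x]
  have hthick_anti : Antitone fun t => P.real (thickening ε {a | t ≤ f a}) :=
    fun s t hst => measureReal_mono (thickening_subset_of_subset ε fun a ha => hst.trans ha)
  have hg_anti : Antitone fun t => P.real {a | t ≤ g a} :=
    fun s t hst => measureReal_mono fun a ha => hst.trans ha
  have hthick_sub : ∀ t, thickening ε {a | t ≤ f a} ⊆ {a | t ≤ g a} := fun t a ha => by
    obtain ⟨b, hb, hab⟩ := mem_thickening_iff.1 ha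
    exact (hb.trans (hmod a b hab)).trans_eq (hg a).symm
  calc ∫ x, f x ∂ν ≤ (∫ t in Set.Ioc 0 ‖f‖, P.real (thickening ε {a | t ≤ f a})) + ε * ‖f‖ :=
        f.integral_le_of_levyProkhorovEDist_lt ν P hε hνP (ae_of_all _ hf)
    _ ≤ (∫ t in Set.Ioc 0 ‖f‖, P.real {a | t ≤ g a}) + ε * ‖f‖ := by
        gcongr ?_ + _
        exact setIntegral_mono (integrableOn_Ioc_of_antitone hthick_anti _ _)
          (integrableOn_Ioc_of_antitone hg_anti _ _) fun t => measureReal_mono (hthick_sub t)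
    _ ≤ (∫ t in Set.Ioc 0 ‖g‖, P.real {a | t ≤ g a}) + ε * ‖f‖ := by
        gcongr ?_ + _
        exact setIntegral_mono_set (integrableOn_Ioc_of_antitone hg_anti _ _)
          (ae_of_all _ fun _ => measureReal_nonneg) (Set.Ioc_subset_Ioc_right hfg).eventuallyLE
    _ = ∫ x, f x ∂P + η + ε * ‖f‖ := by
        rw [← g.integral_eq_integral_meas_le P (ae_of_all _ hg0)]
        simp only [hg]
        rw [integral_add (f.integrable P) (integrable_const η)]
        simp

lemma BoundedContinuousFunction.abs_integral_sub_integral_le_of_levyProkhorovEDist_lt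
    (ν P : Measure E) [IsProbabilityMeasure ν] [IsProbabilityMeasure P] (f : E →ᵇ ℝ)
    {ε η : ℝ} (hε : 0 < ε) (hη : 0 ≤ η) (hmod : ∀ x y, dist x y < ε → |f x - f y| ≤ η)
    (hνP : levyProkhorovEDist ν P < ENNReal.ofReal ε) :
    |∫ x, f x ∂ν - ∫ x, f x ∂P| ≤ η + 2 * ε * ‖f‖ := by
  set g := f + BoundedContinuousFunction.const E ‖f‖
  have hg : ∀ x, g x = f x + ‖f‖ := fun x => rfl
  have hg0 : ∀ x, 0 ≤ g x := fun x => by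
    rw [hg]; linarith [neg_abs_le (f x), f.norm_coe_le_norm x, Real.norm_eq_abs (f x)]
  have hgmod : ∀ x y, dist x y < ε → g y ≤ g x + η := fun x y h => by
    rw [hg, hg]; linarith [abs_le.1 (hmod x y h)]
  have hgf : ‖g‖ ≤ 2 * ‖f‖ := (norm_add_le _ _).trans <| by
    linarith [norm_const_le (α := E) ‖f‖, norm_norm f]
  have hint : ∀ (μ : Measure E) [IsProbabilityMeasure μ], ∫ x, g x ∂μ = ∫ x, f x ∂μ + ‖f‖ :=
    fun μ _ => by simp only [hg]; rw [integral_add (f.integrable μ) (integrable_const _)]; simp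
  have h₁ := g.integral_le_integral_add_of_levyProkhorovEDist_lt ν P hg0 hε hη hgmod hνP
  have h₂ := g.integral_le_integral_add_of_levyProkhorovEDist_lt P ν hg0 hε hη hgmod
    (levyProkhorovEDist_comm P ν ▸ hνP)
  rw [hint, hint] at h₁ h₂
  have hεg : ε * ‖g‖ ≤ 2 * ε * ‖f‖ := by nlinarith
  rw [abs_le]
  constructor <;> linarith

lemma exists_forall_abs_integral_sub_le_of_levyProkhorovEDist_lt {ι : Type*} {H : ι → E → ℝ}
    (hH : UniformEquicontinuous H) {M : ℝ} (hM : ∀ i x, |H i x| ≤ M) {s : ℝ} (hs : 0 < s) :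
    ∃ ε > 0, ∀ (ν P : Measure E) [IsProbabilityMeasure ν] [IsProbabilityMeasure P],
      levyProkhorovEDist ν P < ENNReal.ofReal ε → ∀ i, |∫ x, H i x ∂ν - ∫ x, H i x ∂P| ≤ s := by
  obtain ⟨δ, hδ, hHδ⟩ := Metric.uniformEquicontinuous_iff.1 hH (s / 2) (half_pos hs)
  set ε := min δ (s / (4 * (|M| + 1)))
  have hε : 0 < ε := by positivity
  refine ⟨ε, hε, fun ν P _ _ hνP i => ?_⟩
  let f : E →ᵇ ℝ := .ofNormedAddCommGroup (H i) (hH.uniformContinuous i).continuous |M|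
    fun x => (hM i x).trans (le_abs_self M)
  have hf : ‖f‖ ≤ |M| := norm_ofNormedAddCommGroup_le _ (abs_nonneg M) _
  have hbound := f.abs_integral_sub_integral_le_of_levyProkhorovEDist_lt ν P hε (half_pos hs).le
    (fun x y h => (hHδ x y (h.trans_le (min_le_left _ _)) i).le) hνP
  have hεM : 2 * ε * ‖f‖ ≤ s / 2 := calc
    2 * ε * ‖f‖ ≤ 2 * (s / (4 * (|M| + 1))) * (|M| + 1) := by
      gcongr
      · exact min_le_right _ _
      · linarith
    _ = s / 2 := by field_simp; ring
  exact hbound.trans (by linarith)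

end WeakConvergence

section LatticeAverage

variable {d : ℕ}

lemma card_latticeCube_le (c : Fin d → ℤ) {m : ℕ} (hm : 1 ≤ m) :
    (#(latticeCube c m) : ℝ) ≤ (3 * m) ^ d := by
  rw [card_latticeCube]
  push_cast
  gcongr
  linarith [(Nat.one_le_cast (α := ℝ)).2 hm]

open Classical in
lemma tsum_le_mul_card_latticeCube {F : (Fin d → ℤ) → ℝ} {m : ℕ}
    (hF : ∀ x ∉ latticeCube 0 m, F x = 0) {Z : Set (Fin d → ℤ)} {s c r : ℝ} (hs : 0 ≤ s)
    (hc : 0 ≤ c) (hgood : ∀ x ∉ Z, F x ≤ s) (hbad : ∀ x, F x ≤ c)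
    (hZ : (#{x ∈ latticeCube 0 m | x ∈ Z} : ℝ) ≤ r * #(latticeCube (0 : Fin d → ℤ) m)) :
    ∑' x, F x ≤ (s + c * r) * #(latticeCube (0 : Fin d → ℤ) m) := by
  rw [tsum_eq_sum hF]
  calc ∑ x ∈ latticeCube 0 m, F x ≤ ∑ x ∈ latticeCube 0 m, (s + c * Z.indicator 1 x) :=
        Finset.sum_le_sum fun x _ => by
          by_cases hx : x ∈ Z
          · simpa [hx] using (hbad x).trans (le_add_of_nonneg_left hs)
          · simpa [hx] using hgood x hx
    _ = s * #(latticeCube (0 : Fin d → ℤ) m) + c * #{x ∈ latticeCube 0 m | x ∈ Z} := by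
        rw [Finset.sum_add_distrib, ← Finset.mul_sum, Finset.natCast_card_filter]
        simp [Set.indicator_apply, mul_comm]
    _ ≤ (s + c * r) * #(latticeCube (0 : Fin d → ℤ) m) := by nlinarith

lemma exists_forall_mem_latticeCube_of_isBounded {A : Set (EuclideanSpace ℝ (Fin d))}
    (hA : Bornology.IsBounded A) :
    ∃ R : ℕ, 1 ≤ R ∧ ∀ (n : ℕ) (x : Fin d → ℤ), 0 < n →
      WithLp.toLp 2 (fun i => (x i : ℝ) / n) ∈ A → x ∈ latticeCube 0 (R * n) := by
  obtain ⟨C, hC⟩ := hA.exists_norm_le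
  refine ⟨⌈C⌉₊ + 1, by omega, fun n x hn hx => mem_latticeCube.2 ?_⟩
  have hn' : (0 : ℝ) < n := by exact_mod_cast hn
  refine (dist_pi_le_iff (by positivity)).2 fun i => ?_
  have hxi : |(x i : ℝ)| / n ≤ C := by
    simpa [abs_div, abs_of_pos hn'] using (PiLp.norm_apply_le _ i).trans (hC _ hx)
  rw [div_le_iff₀ hn'] at hxi
  rw [Pi.zero_apply, Int.dist_eq, Int.cast_zero, sub_zero]
  push_cast
  nlinarith [Nat.le_ceil C]

open Classical in
theorem tendsto_latticeAverage_zero {A : Set (EuclideanSpace ℝ (Fin d))}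
    (hA : Bornology.IsBounded A) {Δ : ℕ → (Fin d → ℤ) → ℝ} {K : ℝ} (hΔ0 : ∀ n x, 0 ≤ Δ n x)
    (hΔK : ∀ n x, Δ n x ≤ K)
    (hsmall : ∀ s > 0, ∃ Z : ℕ → Set (Fin d → ℤ), (∀ n, ∀ x ∉ Z n, Δ n x ≤ s) ∧
      ∀ᶠ n in atTop, ∀ m,
        (#{x ∈ latticeCube 0 m | x ∈ Z n} : ℝ) ≤ s * #(latticeCube (0 : Fin d → ℤ) m)) :
    Tendsto (fun n : ℕ => 1 / (n : ℝ) ^ d * ∑' x : Fin d → ℤ,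
      A.indicator (fun _ => (1 : ℝ)) (WithLp.toLp 2 fun i => (x i : ℝ) / n) * Δ n x)
      atTop (𝓝 0) := by
  obtain ⟨R, hR, hAR⟩ := exists_forall_mem_latticeCube_of_isBounded hA
  have hK : 0 ≤ K := (hΔ0 0 0).trans (hΔK 0 0)
  have hind : ∀ (n : ℕ) (x : Fin d → ℤ) {t : ℝ}, 0 ≤ t →
      A.indicator (fun _ => (1 : ℝ)) (WithLp.toLp 2 fun i => (x i : ℝ) / n) * t ≤ t :=
    fun n x t ht => by by_cases h : WithLp.toLp 2 (fun i => (x i : ℝ) / n) ∈ A <;> simp [h, ht]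
  set C := (3 * R : ℝ) ^ d * (1 + K)
  refine tendsto_order.2 ⟨fun a ha => Eventually.of_forall fun n => ha.trans_le ?_, fun ε hε => ?_⟩
  · refine mul_nonneg (by positivity) (tsum_nonneg fun x => mul_nonneg ?_ (hΔ0 n x))
    exact Set.indicator_nonneg (fun _ _ => zero_le_one) _
  obtain ⟨Z, hZ_good, hZ_dense⟩ := hsmall (ε / (C + 1)) (by positivity)
  filter_upwards [hZ_dense, eventually_ge_atTop 1] with n hn hn1
  have hn' : (0 : ℝ) < n := by exact_mod_cast hn1
  have hsum := tsum_le_mul_card_latticeCube (m := R * n) (Z := Z n) (fun x hx => ?_)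
    (by positivity) hK (fun x hx => (hind n x (hΔ0 n x)).trans (hZ_good n x hx))
    (fun x => (hind n x (hΔ0 n x)).trans (hΔK n x)) (hn (R * n))
  · calc 1 / (n : ℝ) ^ d * ∑' x : Fin d → ℤ,
          A.indicator (fun _ => (1 : ℝ)) (WithLp.toLp 2 fun i => (x i : ℝ) / n) * Δ n x
        ≤ 1 / (n : ℝ) ^ d * ((ε / (C + 1) + K * (ε / (C + 1))) * (3 * (R * n : ℕ)) ^ d) := by
          gcongr
          exact hsum.trans (by gcongr; exact card_latticeCube_le 0 (Nat.one_le_iff_ne_zero.2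
            (mul_ne_zero (by omega) (by omega))))
      _ = C * (ε / (C + 1)) := by
          push_cast
          field_simp
          ring
      _ < ε := by
          rw [mul_div_assoc']
          exact (div_lt_iff₀ (by positivity)).2 (by nlinarith [show 0 ≤ C by positivity])
  · have hxA : WithLp.toLp 2 (fun i => (x i : ℝ) / n) ∉ A := fun h => hx (hAR n x hn1 h)
    simp [hxA]

end LatticeAverage

theorem stmt0_general
    (d : ℕ)
    {Ω : Type*} [MeasurableSpace Ω] (Q : Measure Ω) [IsProbabilityMeasure Q]
    (τ : (Fin d → ℤ) → Ω → Ω)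
    (hτ_add : ∀ z w, τ (z + w) = τ z ∘ τ w)
    (hτ_pres : ∀ z, MeasurePreserving (τ z) Q Q)
    {E : Type*} [MetricSpace E] [TopologicalSpace.SeparableSpace E]
    [MeasurableSpace E] [BorelSpace E]
    (T : EuclideanSpace ℝ (Fin d) → E → E)
    (hT_isom : ∀ v, Isometry (T v))
    (Ω₀ : Set Ω) (hΩ₀_meas : MeasurableSet Ω₀)
    (μ : ℕ → Kernel Ω E) (hμ : ∀ n, IsMarkovKernel (μ n))
    (P : Measure E) [IsProbabilityMeasure P]
    (hweak : ∀ᵐ ω ∂Q, ω ∈ Ω₀ → ∀ G : E → ℝ, Continuous G → (∃ M, ∀ z, |G z| ≤ M) →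
      Tendsto (fun n => ∫ z, G z ∂(μ n ω)) atTop (𝓝 (∫ z, G z ∂P))) :
    ∀ᵐ ω ∂Q, ∀ A : Set (EuclideanSpace ℝ (Fin d)), IsCompact A →
      ∀ G : E → ℝ, UniformContinuous G → (∃ M, ∀ z, |G z| ≤ M) →
      Tendsto (fun n : ℕ =>
        (1 / (n : ℝ) ^ d) * ∑' x : Fin d → ℤ,
          (A.indicator (fun _ => (1 : ℝ)) (WithLp.toLp 2 (fun i => (x i : ℝ) / n)) *
            Ω₀.indicator (fun _ => (1 : ℝ)) (τ x ω)) *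
          |(∫ z, G (T (WithLp.toLp 2 (fun i => (x i : ℝ) / n)) z) ∂(μ n (τ x ω))) -
            ∫ z, G (T (WithLp.toLp 2 (fun i => (x i : ℝ) / n)) z) ∂P|)
        atTop (𝓝 0) := by
  -- one test family per scale `1 / (j + 1)`: countably many, so the null sets can be combined
  choose J δ hδ hJ using fun j : ℕ =>
    exists_finset_forall_abs_integral_sub_le_imp_levyProkhorovEDist_lt P
      (Nat.one_div_pos_of_nat (n := j))
  set B : ℕ → ℕ → Set Ω := fun j n => Ω₀ ∩ deviationSet (μ n) P (J j) (δ j)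
  have hB_ev : ∀ j, ∀ᵐ ω ∂Q, ∀ᶠ n in atTop, ω ∉ B j n := fun j => by
    filter_upwards [hweak] with ω hω
    by_cases h₀ : ω ∈ Ω₀
    · exact (eventually_notMem_deviationSet (fun g => hω h₀ g g.continuous
        ⟨‖g‖, fun z => by simpa using g.norm_coe_le_norm z⟩) (J j) (hδ j)).mono
        fun n hn hB => hn hB.2
    · exact .of_forall fun n hB => h₀ hB.1
  filter_upwards [ae_all_iff.2 fun j => ae_forall_eventually_forall_card_filter_lt hτ_add hτ_pres
    (fun n => hΩ₀_meas.inter (measurableSet_deviationSet _ _ _ _)) (hB_ev j)]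
    with ω hω A hA G hG ⟨M, hM⟩
  have hGT : UniformEquicontinuous fun w => G ∘ T w :=
    hG.comp_uniformEquicontinuous (uniformEquicontinuous_of_isometry hT_isom)
  simp_rw [mul_assoc]
  refine tendsto_latticeAverage_zero hA.isBounded (K := 2 * |M|)
    (fun n x => mul_nonneg (Set.indicator_nonneg (fun _ _ => zero_le_one) _) (abs_nonneg _))
    (fun n x => ?_) fun s hs => ?_
  · by_cases h₀ : τ x ω ∈ Ω₀
    · simpa [h₀] using abs_integral_sub_integral_le_two_mul (ν := μ n (τ x ω)) (P := P)
        fun z => (hM (T _ z)).trans (le_abs_self M)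
    · simp [h₀]
  · obtain ⟨ε, hε, hGε⟩ := exists_forall_abs_integral_sub_le_of_levyProkhorovEDist_lt hGT
      (fun w z => hM (T w z)) hs
    obtain ⟨j, hj⟩ := exists_nat_one_div_lt hε
    refine ⟨fun n => {x | τ x ω ∈ B j n}, fun n x hx => ?_,
      (hω j s hs).mono fun n hn m => (hn m).le⟩
    by_cases h₀ : τ x ω ∈ Ω₀
    · have hLP := (hJ j (μ n (τ x ω)) (notMem_deviationSet.1 fun h => hx ⟨h₀, h⟩)).trans_le
        (ENNReal.ofReal_le_ofReal hj.le)
      simpa [h₀] using hGε _ P hLP (WithLp.toLp 2 fun i => (x i : ℝ) / n)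
    · simp [h₀, hs.le]

/-- Under the ergodic environment assumption and the quenched
weak-convergence assumption, for `Q`-a.e. `ω`, for every compact `A ⊆ ℝ^d` and every
bounded uniformly continuous `G : E → ℝ`,
`(1/n^d) ∑_{x∈ℤ^d} 1_A(x/n) 1_{Ω₀}(τ_x ω) |∫ G(T_{x/n} z) dμ_n^{τ_x ω} − ∫ G(T_{x/n} z) dP| → 0`. -/
theorem stmt0
    (d : ℕ) (hd : 1 ≤ d)
    {Ω : Type*} [MeasurableSpace Ω] (Q : Measure Ω) [IsProbabilityMeasure Q]
    (τ : (Fin d → ℤ) → Ω → Ω)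
    (hτ_meas : ∀ z, Measurable (τ z))
    (hτ_zero : τ 0 = id)
    (hτ_add : ∀ z w, τ (z + w) = τ z ∘ τ w)
    (hτ_pres : ∀ z, MeasurePreserving (τ z) Q Q)
    (hτ_erg : ∀ A : Set Ω, MeasurableSet A → (∀ z, τ z ⁻¹' A = A) → Q A = 0 ∨ Q A = 1)
    {E : Type*} [MetricSpace E] [CompleteSpace E] [TopologicalSpace.SeparableSpace E]
    [MeasurableSpace E] [BorelSpace E]
    (T : EuclideanSpace ℝ (Fin d) → E → E)
    (hT_isom : ∀ v, Isometry (T v))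
    (hT_zero : T 0 = id)
    (hT_add : ∀ v w, T (v + w) = T v ∘ T w)
    (Ω₀ : Set Ω) (hΩ₀_meas : MeasurableSet Ω₀) (hΩ₀_pos : 0 < Q Ω₀)
    (μ : ℕ → Kernel Ω E) (hμ : ∀ n, IsMarkovKernel (μ n))
    (P : Measure E) [IsProbabilityMeasure P]
    (hweak : ∀ᵐ ω ∂Q, ω ∈ Ω₀ → ∀ G : E → ℝ, Continuous G → (∃ M, ∀ z, |G z| ≤ M) →
      Tendsto (fun n => ∫ z, G z ∂(μ n ω)) atTop (𝓝 (∫ z, G z ∂P))) :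
    ∀ᵐ ω ∂Q, ∀ A : Set (EuclideanSpace ℝ (Fin d)), IsCompact A →
      ∀ G : E → ℝ, UniformContinuous G → (∃ M, ∀ z, |G z| ≤ M) →
      Tendsto (fun n : ℕ =>
        (1 / (n : ℝ) ^ d) * ∑' x : Fin d → ℤ,
          (A.indicator (fun _ => (1 : ℝ)) (WithLp.toLp 2 (fun i => (x i : ℝ) / n)) *
            Ω₀.indicator (fun _ => (1 : ℝ)) (τ x ω)) *
          |(∫ z, G (T (WithLp.toLp 2 (fun i => (x i : ℝ) / n)) z) ∂(μ n (τ x ω))) -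
            ∫ z, G (T (WithLp.toLp 2 (fun i => (x i : ℝ) / n)) z) ∂P|)
        atTop (𝓝 0) :=
  stmt0_general d Q τ hτ_add hτ_pres T hT_isom Ω₀ hΩ₀_meas μ hμ P hweak
end

section
/- Under the ergodic environment assumption and the quenched weak-convergence assumption, for all K, L, M > 0 there exists a set Ω^{K,L,M} ∈ 𝓕 with Q(Ω^{K,L,M}) = 1 such that for every ω ∈ Ω^{K,L,M}, every compact set A ⊂ ℝ^d contained in the closed Euclidean ball of radius K centered at the origin, and every function G : E → ℝ that is Lipschitz with Lipschitz constant at most L and satisfies sup_{z∈E} |G(z)| ≤ M, one has (1/n^d) · Σ_{x ∈ ℤ^d} 1_A(x/n) · 1_{Ω₀}(τ_x ω) · | ∫_E G(T_{x/n} z) dμ_n^{τ_x ω}(z) − ∫_E G(T_{x/n} z) dP(z) | → 0 as n → ∞. -/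
/-!
Fix `ω`. For `x/n ∈ A` the summand is at most `D n (τ x ω)`, where `D n ω'` is the supremum of
`|∫ F dμ_n^{ω'} - ∫ F dP|` over a countable family of clamped McShane envelopes
`min_{j ≤ k} (q j + L · dist · (e j))` (`e` dense, `q` rational). These envelopes approximate every
`L`-Lipschitz, `M`-bounded function from above, so `D n` dominates the discrepancy of `G ∘ T_v`
(an isometry preserves the Lipschitz constant), and being a countable supremum it is measurable.
Weak convergence means Lévy–Prokhorov convergence, and the bounded-Lipschitz discrepancy is at most
`(L + 2M)` times the Lévy–Prokhorov distance, so `D n → 0` almost surely.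

Since `A ⊆ closedBall 0 K`, only lattice points in the cube of radius `⌈K n⌉` contribute, and
it remains to show that cube averages `n⁻ᵈ ∑_{|x|∞ ≤ ⌈Kn⌉} D n (τ x ω)` of an almost surely
vanishing bounded sequence vanish almost surely. This follows from Wiener's maximal inequality
for cube averages along a measure-preserving `ℤᵈ`-action, proved by a Vitali covering of
`ℤᵈ` by cubes and a transference argument.
-/

open MeasureTheory Filter Topology ProbabilityTheory Set Metric
open scoped NNReal BoundedContinuousFunction

section LevyProkhorov

variable {X : Type*} [MeasurableSpace X] {μ ν : Measure X} [IsProbabilityMeasure μ]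
  [IsProbabilityMeasure ν] {F : X → ℝ} {K : ℝ≥0} {M : ℝ}

lemma integral_add_const_of_integrable (hF : Integrable F μ) (a : ℝ) :
    ∫ z, F z + a ∂μ = ∫ z, F z ∂μ + a := by
  rw [integral_add hF (integrable_const a), integral_const, probReal_univ, one_smul]

lemma abs_integral_sub_integral_le_two_mul_s1 (hFM : ∀ z, |F z| ≤ M) :
    |∫ z, F z ∂μ - ∫ z, F z ∂ν| ≤ 2 * M := by
  have h : ∀ (κ : Measure X) [IsProbabilityMeasure κ], |∫ z, F z ∂κ| ≤ M := fun κ _ => by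
    simpa using norm_integral_le_of_norm_le_const (μ := κ) (f := F) (Eventually.of_forall hFM)
  linarith [abs_sub (∫ z, F z ∂μ) (∫ z, F z ∂ν), h μ, h ν]

lemma integrableOn_Ioc_measureReal_of_antitone {s : ℝ → Set X} (hs : Antitone s) (a b : ℝ) :
    IntegrableOn (fun t => ν.real (s t)) (Ioc a b) :=
  have hanti : Antitone fun t => ν.real (s t) := fun _ _ h => measureReal_mono (hs h)
  (hanti.locallyIntegrable.integrableOn_isCompact isCompact_Icc).mono_set Ioc_subset_Icc_self

lemma LipschitzWith.thickening_setOf_le_subset {Y : Type*} [PseudoMetricSpace Y] {f : Y → ℝ}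
    (hf : LipschitzWith K f) (t ε : ℝ) :
    thickening ε {a | t ≤ f a} ⊆ {a | t ≤ f a + K * ε} := by
  intro z hz
  obtain ⟨w, hw, hzw⟩ := mem_thickening_iff.1 hz
  have hfzw : f w - f z ≤ K * dist w z := (le_abs_self _).trans (hf.dist_le_mul w z)
  have : (K : ℝ) * dist w z ≤ K * ε := by rw [dist_comm]; gcongr
  simp only [mem_ofPred_eq] at hw ⊢
  linarith

variable [PseudoMetricSpace X] [OpensMeasurableSpace X]

lemma BoundedContinuousFunction.integral_le_integral_add_of_levyProkhorovEDist_lt_s1 (f : X →ᵇ ℝ)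
    (hf : LipschitzWith K f) (hf₀ : ∀ z, 0 ≤ f z) {ε : ℝ} (hε : 0 < ε)
    (hμν : levyProkhorovEDist μ ν < ENNReal.ofReal ε) :
    ∫ z, f z ∂μ ≤ ∫ z, f z ∂ν + (K + ‖f‖) * ε := by
  have hthick_anti : Antitone fun t => thickening ε {a | t ≤ f a} :=
    fun _ _ hst => thickening_subset_of_subset ε fun _ h => hst.trans h
  have hshift_anti : Antitone fun t => {a | t ≤ f a + K * ε} := fun _ _ hst _ h => hst.trans h
  have hKε : 0 ≤ (K : ℝ) * ε := by positivity
  have hshift_int : Integrable (fun z => f z + K * ε) ν := (f.integrable ν).add (integrable_const _)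
  calc ∫ z, f z ∂μ
      ≤ (∫ t in Ioc 0 ‖f‖, ν.real (thickening ε {a | t ≤ f a})) + ε * ‖f‖ :=
        f.integral_le_of_levyProkhorovEDist_lt μ ν hε hμν (Eventually.of_forall hf₀)
    _ ≤ (∫ t in Ioc 0 ‖f‖, ν.real {a | t ≤ f a + K * ε}) + ε * ‖f‖ := by
        gcongr ?_ + _
        exact setIntegral_mono_on (integrableOn_Ioc_measureReal_of_antitone hthick_anti _ _)
          (integrableOn_Ioc_measureReal_of_antitone hshift_anti _ _) measurableSet_Ioc
          fun t _ => measureReal_mono (hf.thickening_setOf_le_subset t ε)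
    _ ≤ (∫ t in Ioc 0 (‖f‖ + K * ε), ν.real {a | t ≤ f a + K * ε}) + ε * ‖f‖ := by
        gcongr ?_ + _
        exact setIntegral_mono_set (integrableOn_Ioc_measureReal_of_antitone hshift_anti _ _)
          (Eventually.of_forall fun _ => measureReal_nonneg)
          (Ioc_subset_Ioc_right (by linarith)).eventuallyLE
    _ = ∫ z, f z + K * ε ∂ν + ε * ‖f‖ := by
        rw [hshift_int.integral_eq_integral_Ioc_meas_le (M := ‖f‖ + K * ε)
          (Eventually.of_forall fun z => by simpa using add_nonneg (hf₀ z) hKε)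
          (Eventually.of_forall fun z => by
            simpa using (le_abs_self _).trans (f.norm_coe_le_norm z))]
    _ = ∫ z, f z ∂ν + (K + ‖f‖) * ε := by
        rw [integral_add_const_of_integrable (f.integrable ν)]
        ring

lemma integral_sub_integral_le_of_levyProkhorovEDist_lt (hF : LipschitzWith K F)
    (hFM : ∀ z, |F z| ≤ M) {ε : ℝ} (hε : 0 < ε)
    (hμν : levyProkhorovEDist μ ν < ENNReal.ofReal ε) :
    ∫ z, F z ∂μ - ∫ z, F z ∂ν ≤ (K + 2 * M) * ε := by
  have hF₀ : ∀ z, 0 ≤ F z + M := fun z => by linarith [neg_abs_le (F z), hFM z]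
  let f : X →ᵇ ℝ := .ofNormedAddCommGroup (fun z => F z + M)
    (hF.continuous.add continuous_const) (2 * M) fun z => by
      rw [Real.norm_eq_abs, abs_of_nonneg (hF₀ z)]; linarith [le_abs_self (F z), hFM z]
  have hfM : ‖f‖ ≤ 2 * M := by
    obtain ⟨z₀⟩ := nonempty_of_isProbabilityMeasure μ
    exact BoundedContinuousFunction.norm_ofNormedAddCommGroup_le _
      (by linarith [abs_nonneg (F z₀), hFM z₀]) _
  have hf : ∀ (κ : Measure X) [IsProbabilityMeasure κ], ∫ z, f z ∂κ = ∫ z, F z ∂κ + M :=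
    fun κ _ => integral_add_const_of_integrable
      (.of_bound hF.continuous.aestronglyMeasurable M (Eventually.of_forall hFM)) M
  have key := f.integral_le_integral_add_of_levyProkhorovEDist_lt_s1
    (add_zero K ▸ hF.add (LipschitzWith.const M)) hF₀ hε hμν
  rw [hf, hf] at key
  nlinarith

lemma abs_integral_sub_integral_le_levyProkhorovDist (hF : LipschitzWith K F)
    (hFM : ∀ z, |F z| ≤ M) :
    |∫ z, F z ∂μ - ∫ z, F z ∂ν| ≤ (K + 2 * M) * levyProkhorovDist μ ν := by
  refine ge_of_tendsto (((continuous_const_mul _).tendsto _).mono_left nhdsWithin_le_nhds)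
    (eventually_nhdsWithin_of_forall (s := Ioi (levyProkhorovDist μ ν)) fun ε hε => ?_)
  have hε₀ : 0 < ε := ENNReal.toReal_nonneg.trans_lt hε
  have hlt : levyProkhorovEDist μ ν < ENNReal.ofReal ε :=
    (ENNReal.lt_ofReal_iff_toReal_lt (levyProkhorovEDist_ne_top μ ν)).2 hε
  rw [abs_sub_le_iff]
  exact ⟨integral_sub_integral_le_of_levyProkhorovEDist_lt hF hFM hε₀ hlt,
    integral_sub_integral_le_of_levyProkhorovEDist_lt hF hFM hε₀
      (levyProkhorovEDist_comm μ ν ▸ hlt)⟩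

end LevyProkhorov

lemma tendsto_levyProkhorovDist_of_tendsto_integral {X : Type*} [PseudoMetricSpace X]
    [TopologicalSpace.SeparableSpace X] [MeasurableSpace X] [BorelSpace X]
    {μs : ℕ → Measure X} [∀ n, IsProbabilityMeasure (μs n)] {ν : Measure X}
    [IsProbabilityMeasure ν]
    (h : ∀ f : X →ᵇ ℝ, Tendsto (fun n => ∫ z, f z ∂μs n) atTop (𝓝 (∫ z, f z ∂ν))) :
    Tendsto (fun n => levyProkhorovDist (μs n) ν) atTop (𝓝 0) := by
  let Ps : ℕ → ProbabilityMeasure X := fun n => ⟨μs n, inferInstance⟩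
  let P : ProbabilityMeasure X := ⟨ν, inferInstance⟩
  have hweak : Tendsto Ps atTop (𝓝 P) :=
    ProbabilityMeasure.tendsto_iff_forall_integral_tendsto.2 h
  exact tendsto_iff_dist_tendsto_zero.1
    ((LevyProkhorov.probabilityMeasureHomeomorph.continuous.tendsto _).comp hweak)

section LipschitzEnvelope

variable {X : Type*} [PseudoMetricSpace X] (e : ℕ → X) (K : ℝ≥0) (M : ℝ)

/-- The index `⟨k, q⟩` prescribes rational heights `q j` at the points `e j`, `j ≤ k`; the index
type is countable, which makes `lipschitzDiscrepancy` below measurable in the measures. -/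
noncomputable def lipschitzEnvelope (i : (k : ℕ) × (Fin (k + 1) → ℚ)) (z : X) : ℝ :=
  max (-M) (min M (Finset.univ.inf' Finset.univ_nonempty
    fun j : Fin (i.1 + 1) => (i.2 j : ℝ) + K * dist z (e j)))

noncomputable def lipschitzDiscrepancy [MeasurableSpace X] (μ ν : Measure X) : ℝ :=
  ⨆ i, |∫ z, lipschitzEnvelope e K M i z ∂μ - ∫ z, lipschitzEnvelope e K M i z ∂ν|

variable {e K M}

lemma lipschitzWith_lipschitzEnvelope (i : (k : ℕ) × (Fin (k + 1) → ℚ)) :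
    LipschitzWith K (lipschitzEnvelope e K M i) := by
  refine (LipschitzWith.of_le_add_mul K fun z w => ?_).const_min M |>.const_max (-M)
  rw [← sub_le_iff_le_add]
  refine Finset.le_inf' _ _ fun j _ => ?_
  have := Finset.inf'_le (fun j : Fin (i.1 + 1) => (i.2 j : ℝ) + K * dist z (e j))
    (Finset.mem_univ j)
  have := dist_triangle z w (e j)
  nlinarith [K.coe_nonneg]

lemma abs_lipschitzEnvelope_le (hM : 0 ≤ M) (i : (k : ℕ) × (Fin (k + 1) → ℚ)) (z : X) :
    |lipschitzEnvelope e K M i z| ≤ M :=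
  abs_le.2 ⟨le_max_left _ _, max_le (by linarith) (min_le_left _ _)⟩

lemma le_lipschitzEnvelope {F : X → ℝ} (hF : LipschitzWith K F) (hFM : ∀ z, |F z| ≤ M)
    {q : ℕ → ℚ} (hq : ∀ j, F (e j) < q j) (k : ℕ) (z : X) :
    F z ≤ lipschitzEnvelope e K M ⟨k, fun j => q j⟩ z := by
  refine le_max_of_le_right (le_min (abs_le.1 (hFM z)).2 (Finset.le_inf' _ _ fun j _ => ?_))
  have : F z - F (e j) ≤ K * dist z (e j) := (le_abs_self _).trans (hF.dist_le_mul z (e j))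
  exact (show F z ≤ q j + K * dist z (e j) by linarith [hq j])

lemma lipschitzEnvelope_le {q : ℕ → ℚ} {j k : ℕ} (hjk : j ≤ k) (z : X) :
    lipschitzEnvelope e K M ⟨k, fun j => q j⟩ z ≤ max (-M) (q j + K * dist z (e j)) :=
  max_le_max le_rfl <| (min_le_right _ _).trans <|
    Finset.inf'_le (fun i : Fin (k + 1) => (q i : ℝ) + K * dist z (e i))
      (Finset.mem_univ ⟨j, Nat.lt_succ_of_le hjk⟩)

lemma lipschitzEnvelope_antitone (q : ℕ → ℚ) (z : X) :
    Antitone fun k => lipschitzEnvelope e K M ⟨k, fun j => q j⟩ z := fun _ k' hkk' =>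
  max_le_max le_rfl <| min_le_min le_rfl <| Finset.le_inf' _ _ fun j _ =>
    Finset.inf'_le (fun i : Fin (k' + 1) => (q i : ℝ) + K * dist z (e i))
      (Finset.mem_univ ⟨j, j.isLt.trans_le (Nat.succ_le_succ hkk')⟩)

lemma exists_tendsto_lipschitzEnvelope (he : DenseRange e) {F : X → ℝ} (hF : LipschitzWith K F)
    (hFM : ∀ z, |F z| ≤ M) {δ : ℝ} (hδ : 0 < δ) :
    ∃ (q : ℕ → ℚ) (ℓ : X → ℝ),
      (∀ z, Tendsto (fun k => lipschitzEnvelope e K M ⟨k, fun j => q j⟩ z) atTop (𝓝 (ℓ z))) ∧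
        ∀ z, F z ≤ ℓ z ∧ ℓ z ≤ F z + δ := by
  choose q hq₁ hq₂ using fun j => exists_rat_btwn (lt_add_of_pos_right (F (e j)) hδ)
  have hbdd : ∀ z, BddBelow (range fun k => lipschitzEnvelope e K M ⟨k, fun j => q j⟩ z) :=
    fun z => ⟨F z, forall_mem_range.2 (le_lipschitzEnvelope hF hFM hq₁ · z)⟩
  refine ⟨q, fun z => ⨅ k, lipschitzEnvelope e K M ⟨k, fun j => q j⟩ z,
    fun z => tendsto_atTop_ciInf (lipschitzEnvelope_antitone q z) (hbdd z),
    fun z => ⟨le_ciInf (le_lipschitzEnvelope hF hFM hq₁ · z), ?_⟩⟩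
  refine le_of_forall_pos_le_add fun η hη => ?_
  obtain ⟨j, hj⟩ := Metric.denseRange_iff.1 he z (η / (2 * (K + 1))) (by positivity)
  have hKd : K * dist z (e j) ≤ η / 2 := calc
    K * dist z (e j) ≤ (K + 1) * dist z (e j) := by nlinarith [dist_nonneg (x := z) (y := e j)]
    _ ≤ (K + 1) * (η / (2 * (K + 1))) := by gcongr
    _ = η / 2 := by field_simp
  have hFj : F (e j) - F z ≤ K * dist z (e j) := by
    rw [dist_comm]; exact (le_abs_self _).trans (hF.dist_le_mul (e j) z)
  calc ⨅ k, lipschitzEnvelope e K M ⟨k, fun j => q j⟩ z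
      ≤ lipschitzEnvelope e K M ⟨j, fun j => q j⟩ z := ciInf_le (hbdd z) j
    _ ≤ max (-M) (q j + K * dist z (e j)) := lipschitzEnvelope_le le_rfl z
    _ ≤ F z + δ + η :=
      max_le (by linarith [neg_abs_le (F z), hFM z]) (by linarith [hq₂ j])

variable [MeasurableSpace X]

lemma lipschitzDiscrepancy_comm (μ ν : Measure X) :
    lipschitzDiscrepancy e K M μ ν = lipschitzDiscrepancy e K M ν μ :=
  iSup_congr fun _ => abs_sub_comm _ _

lemma lipschitzDiscrepancy_nonneg (μ ν : Measure X) : 0 ≤ lipschitzDiscrepancy e K M μ ν :=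
  Real.iSup_nonneg fun _ => abs_nonneg _

lemma lipschitzDiscrepancy_le_two_mul (hM : 0 ≤ M) (μ ν : Measure X) [IsProbabilityMeasure μ]
    [IsProbabilityMeasure ν] : lipschitzDiscrepancy e K M μ ν ≤ 2 * M :=
  ciSup_le fun i => abs_integral_sub_integral_le_two_mul_s1 (abs_lipschitzEnvelope_le hM i)

variable [OpensMeasurableSpace X]

lemma measurable_lipschitzDiscrepancy {Ω : Type*} [MeasurableSpace Ω] (κ : Kernel Ω X)
    (ν : Measure X) : Measurable fun ω => lipschitzDiscrepancy e K M (κ ω) ν :=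
  Measurable.iSup fun i => ((lipschitzWith_lipschitzEnvelope i).continuous.stronglyMeasurable
    |>.integral_kernel (κ := κ) |>.measurable.sub_const _).abs

variable {μ ν : Measure X} [IsProbabilityMeasure μ] [IsProbabilityMeasure ν]

lemma lipschitzDiscrepancy_le_levyProkhorovDist (hM : 0 ≤ M) :
    lipschitzDiscrepancy e K M μ ν ≤ (K + 2 * M) * levyProkhorovDist μ ν :=
  ciSup_le fun i => abs_integral_sub_integral_le_levyProkhorovDist
    (lipschitzWith_lipschitzEnvelope i) (abs_lipschitzEnvelope_le hM i)

lemma integral_sub_integral_le_lipschitzDiscrepancy_of_tendsto (hM : 0 ≤ M) {q : ℕ → ℚ}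
    {ℓ : X → ℝ}
    (hℓ : ∀ z, Tendsto (fun k => lipschitzEnvelope e K M ⟨k, fun j => q j⟩ z) atTop (𝓝 (ℓ z))) :
    ∫ z, ℓ z ∂μ - ∫ z, ℓ z ∂ν ≤ lipschitzDiscrepancy e K M μ ν := by
  have hlim : ∀ (κ : Measure X) [IsProbabilityMeasure κ], Tendsto
      (fun k => ∫ z, lipschitzEnvelope e K M ⟨k, fun j => q j⟩ z ∂κ) atTop (𝓝 (∫ z, ℓ z ∂κ)) :=
    fun κ _ => tendsto_integral_of_dominated_convergence (fun _ => M)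
      (fun _ => (lipschitzWith_lipschitzEnvelope _).continuous.aestronglyMeasurable)
      (integrable_const M) (fun _ => Eventually.of_forall (abs_lipschitzEnvelope_le hM _))
      (Eventually.of_forall hℓ)
  have hbdd : BddAbove (range fun i => |∫ z, lipschitzEnvelope e K M i z ∂μ -
      ∫ z, lipschitzEnvelope e K M i z ∂ν|) :=
    ⟨2 * M, forall_mem_range.2 fun i => abs_integral_sub_integral_le_two_mul_s1
      (abs_lipschitzEnvelope_le hM i)⟩
  exact le_of_tendsto' ((hlim μ).sub (hlim ν)) fun _ => (le_abs_self _).trans (le_ciSup hbdd _)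

lemma integral_sub_integral_le_lipschitzDiscrepancy (he : DenseRange e) {F : X → ℝ}
    (hF : LipschitzWith K F) (hFM : ∀ z, |F z| ≤ M) :
    ∫ z, F z ∂μ - ∫ z, F z ∂ν ≤ lipschitzDiscrepancy e K M μ ν := by
  obtain ⟨z₀⟩ := nonempty_of_isProbabilityMeasure μ
  have hM : 0 ≤ M := (abs_nonneg _).trans (hFM z₀)
  refine le_of_forall_pos_le_add fun δ hδ => ?_
  obtain ⟨q, ℓ, hℓ, hFℓ⟩ := exists_tendsto_lipschitzEnvelope he hF hFM hδ
  have hℓm : Measurable ℓ := measurable_of_tendsto_metrizable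
    (fun _ => (lipschitzWith_lipschitzEnvelope _).continuous.measurable) (tendsto_pi_nhds.2 hℓ)
  have hℓ_int : ∀ (κ : Measure X) [IsProbabilityMeasure κ], Integrable ℓ κ := fun κ _ =>
    .of_bound hℓm.aestronglyMeasurable (M + δ) (Eventually.of_forall fun z => by
      rw [Real.norm_eq_abs, abs_le]
      constructor <;> linarith [hFℓ z, abs_le.1 (hFM z)])
  have hF_int : ∀ (κ : Measure X) [IsProbabilityMeasure κ], Integrable F κ := fun κ _ =>
    .of_bound hF.continuous.aestronglyMeasurable M (Eventually.of_forall hFM)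
  have hμ : ∫ z, F z ∂μ ≤ ∫ z, ℓ z ∂μ :=
    integral_mono (hF_int μ) (hℓ_int μ) fun z => (hFℓ z).1
  have hν : ∫ z, ℓ z ∂ν ≤ ∫ z, F z ∂ν + δ :=
    (integral_mono (g := fun z => F z + δ) (hℓ_int ν) ((hF_int ν).add (integrable_const δ))
      fun z => (hFℓ z).2).trans_eq (integral_add_const_of_integrable (hF_int ν) δ)
  linarith [integral_sub_integral_le_lipschitzDiscrepancy_of_tendsto (μ := μ) (ν := ν) hM hℓ]

lemma abs_integral_sub_integral_le_lipschitzDiscrepancy (he : DenseRange e) {F : X → ℝ}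
    (hF : LipschitzWith K F) (hFM : ∀ z, |F z| ≤ M) :
    |∫ z, F z ∂μ - ∫ z, F z ∂ν| ≤ lipschitzDiscrepancy e K M μ ν :=
  abs_sub_le_iff.2 ⟨integral_sub_integral_le_lipschitzDiscrepancy he hF hFM,
    lipschitzDiscrepancy_comm (e := e) μ ν ▸
      integral_sub_integral_le_lipschitzDiscrepancy he hF hFM⟩

end LipschitzEnvelope

lemma tendsto_lipschitzDiscrepancy_of_tendsto_integral {X : Type*} [PseudoMetricSpace X]
    [TopologicalSpace.SeparableSpace X] [MeasurableSpace X] [BorelSpace X] (e : ℕ → X)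
    (K : ℝ≥0) {M : ℝ} (hM : 0 ≤ M) {μs : ℕ → Measure X} [∀ n, IsProbabilityMeasure (μs n)]
    {ν : Measure X} [IsProbabilityMeasure ν]
    (h : ∀ f : X →ᵇ ℝ, Tendsto (fun n => ∫ z, f z ∂μs n) atTop (𝓝 (∫ z, f z ∂ν))) :
    Tendsto (fun n => lipschitzDiscrepancy e K M (μs n) ν) atTop (𝓝 0) :=
  squeeze_zero (fun _ => lipschitzDiscrepancy_nonneg _ _)
    (fun _ => lipschitzDiscrepancy_le_levyProkhorovDist hM)
    (by simpa using (tendsto_levyProkhorovDist_of_tendsto_integral h).const_mul (K + 2 * M))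

section Cubes

variable {d : ℕ}

noncomputable def cube (y : Fin d → ℤ) (m : ℕ) : Finset (Fin d → ℤ) :=
  Finset.Icc (y - m) (y + m)

lemma mem_cube {x y : Fin d → ℤ} {m : ℕ} : x ∈ cube y m ↔ ∀ i, |x i - y i| ≤ m := by
  simp only [cube, Finset.mem_Icc, Pi.le_def, abs_le, ← forall_and, Pi.sub_apply, Pi.add_apply,
    Pi.natCast_apply]
  exact forall_congr' fun i => by constructor <;> rintro ⟨h₁, h₂⟩ <;> constructor <;> linarith

lemma self_mem_cube (y : Fin d → ℤ) (m : ℕ) : y ∈ cube y m :=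
  mem_cube.2 fun i => by simp

lemma card_cube (y : Fin d → ℤ) (m : ℕ) : (cube y m).card = (2 * m + 1) ^ d := by
  rw [cube, Pi.card_Icc]
  have : ∀ i, (y i + m + 1 - (y i - m)).toNat = 2 * m + 1 := fun i => by omega
  simp [this]

lemma cube_eq_map (y : Fin d → ℤ) (m : ℕ) :
    cube y m = (cube 0 m).map (addLeftEmbedding y) := by
  simp [cube, sub_eq_add_neg]

lemma cube_mono (y : Fin d → ℤ) {m m' : ℕ} (h : m ≤ m') : cube y m ⊆ cube y m' :=
  fun x hx => mem_cube.2 fun i => (mem_cube.1 hx i).trans (by exact_mod_cast h)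

lemma cube_subset_cube_three_mul {a b : Fin d → ℤ} {ma mb : ℕ} (hm : ma ≤ mb)
    (h : ¬ Disjoint (cube a ma) (cube b mb)) : cube a ma ⊆ cube b (3 * mb) := by
  obtain ⟨p, hpa, hpb⟩ := Finset.not_disjoint_iff.1 h
  refine fun x hx => mem_cube.2 fun i => ?_
  have h₁ := mem_cube.1 hx i
  have h₂ := mem_cube.1 hpa i
  have h₃ := mem_cube.1 hpb i
  have : (ma : ℤ) ≤ mb := by exact_mod_cast hm
  calc |x i - b i| ≤ |x i - a i| + |p i - a i| + |p i - b i| := by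
        rw [abs_sub_comm (p i)]
        exact (abs_sub_le _ _ _).trans (by gcongr; exact abs_sub_le _ _ _)
    _ ≤ ((3 * mb : ℕ) : ℤ) := by push_cast; linarith

/-- Greedy Vitali selection: repeatedly keep a largest remaining cube and discard the cubes
meeting it. -/
lemma exists_pairwiseDisjoint_cube_subfamily (t : Finset (Fin d → ℤ)) (ρ : (Fin d → ℤ) → ℕ) :
    ∃ u ⊆ t, (u : Set (Fin d → ℤ)).PairwiseDisjoint (fun a => cube a (ρ a)) ∧
      ∀ a ∈ t, ∃ b ∈ u, ρ a ≤ ρ b ∧ ¬ Disjoint (cube a (ρ a)) (cube b (ρ b)) := by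
  classical
  induction t using Finset.strongInduction with
  | H t ih =>
  obtain rfl | ht := t.eq_empty_or_nonempty
  · exact ⟨∅, by simp⟩
  obtain ⟨a₀, ha₀, hmax⟩ := t.exists_max_image ρ ht
  obtain ⟨u, hu, hdisj, hcov⟩ :=
    ih (t.filter fun a => Disjoint (cube a (ρ a)) (cube a₀ (ρ a₀))) <|
      Finset.filter_ssubset.2 ⟨a₀, ha₀, fun h =>
        Finset.disjoint_left.1 h (self_mem_cube a₀ _) (self_mem_cube a₀ _)⟩
  refine ⟨insert a₀ u, Finset.insert_subset ha₀ (hu.trans (Finset.filter_subset _ _)), ?_, ?_⟩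
  · rw [Finset.coe_insert]
    exact hdisj.insert fun b hb _ => ((Finset.mem_filter.1 (hu hb)).2).symm
  · intro a ha
    by_cases hd : Disjoint (cube a (ρ a)) (cube a₀ (ρ a₀))
    · obtain ⟨b, hb, hab⟩ := hcov a (Finset.mem_filter.2 ⟨ha, hd⟩)
      exact ⟨b, Finset.mem_insert_of_mem hb, hab⟩
    · exact ⟨a₀, Finset.mem_insert_self _ _, hmax a ha, hd⟩

lemma card_le_mul_sum_biUnion_cube {G : (Fin d → ℤ) → ℝ} (hG : ∀ x, 0 ≤ G x) {c : ℝ}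
    (hc : 0 ≤ c) (S : Finset (Fin d → ℤ)) (ρ : (Fin d → ℤ) → ℕ)
    (h : ∀ y ∈ S, ((cube y (3 * ρ y)).card : ℝ) ≤ c * ∑ x ∈ cube y (ρ y), G x) :
    (S.card : ℝ) ≤ c * ∑ x ∈ S.biUnion (fun y => cube y (ρ y)), G x := by
  classical
  obtain ⟨u, hu, hdisj, hcov⟩ := exists_pairwiseDisjoint_cube_subfamily S ρ
  have hS : S ⊆ u.biUnion fun b => cube b (3 * ρ b) := fun y hy => by
    obtain ⟨b, hb, hρ, hyb⟩ := hcov y hy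
    exact Finset.mem_biUnion.2 ⟨b, hb, cube_subset_cube_three_mul hρ hyb (self_mem_cube y _)⟩
  calc (S.card : ℝ) ≤ ∑ b ∈ u, ((cube b (3 * ρ b)).card : ℝ) := by
        exact_mod_cast (Finset.card_le_card hS).trans Finset.card_biUnion_le
    _ ≤ ∑ b ∈ u, c * ∑ x ∈ cube b (ρ b), G x := Finset.sum_le_sum fun b hb => h b (hu hb)
    _ = c * ∑ x ∈ u.biUnion (fun b => cube b (ρ b)), G x := by
        rw [← Finset.mul_sum, Finset.sum_biUnion hdisj]
    _ ≤ c * ∑ x ∈ S.biUnion (fun y => cube y (ρ y)), G x :=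
        mul_le_mul_of_nonneg_left (Finset.sum_le_sum_of_subset_of_nonneg
          (Finset.biUnion_subset_biUnion_of_subset_left _ hu) fun x _ _ => hG x) hc

lemma one_le_of_card_cube_le {r : ℕ → ℕ} {c : ℝ}
    (hc : ∀ n, 1 ≤ n → ((cube (0 : Fin d → ℤ) (3 * r n)).card : ℝ) ≤ c * n ^ d) : 1 ≤ c := by
  have h := hc 1 le_rfl
  have hpos : 1 ≤ (cube (0 : Fin d → ℤ) (3 * r 1)).card :=
    Finset.card_pos.2 ⟨0, self_mem_cube 0 _⟩
  simp only [Nat.cast_one, one_pow, mul_one] at h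
  exact le_trans (by exact_mod_cast hpos) h

lemma mul_card_le_sum_cube {G : (Fin d → ℤ) → ℝ} (hG : ∀ x, 0 ≤ G x)
    {r : ℕ → ℕ} (hr : Monotone r) {c : ℝ}
    (hc : ∀ n, 1 ≤ n → ((cube (0 : Fin d → ℤ) (3 * r n)).card : ℝ) ≤ c * n ^ d)
    {t : ℝ} (ht : 0 < t) {N R : ℕ} {S : Finset (Fin d → ℤ)} (hSR : S ⊆ cube 0 R)
    (hS : ∀ y ∈ S, ∃ n, 1 ≤ n ∧ n ≤ N ∧ t * n ^ d < ∑ x ∈ cube y (r n), G x) :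
    t * S.card ≤ c * ∑ x ∈ cube 0 (R + r N), G x := by
  have hc₀ : 0 ≤ c := zero_le_one.trans (one_le_of_card_cube_le hc)
  choose! n hn using hS
  have hcover := card_le_mul_sum_biUnion_cube hG (div_nonneg hc₀ ht.le) S (fun y => r (n y))
    fun y hy => by
      obtain ⟨hn₁, -, hlt⟩ := hn y hy
      have := hc _ hn₁
      rw [card_cube] at this ⊢
      rw [div_mul_eq_mul_div, le_div_iff₀ ht]
      nlinarith
  have hsub : S.biUnion (fun y => cube y (r (n y))) ⊆ cube 0 (R + r N) := by
    refine Finset.biUnion_subset.2 fun y hy x hx => mem_cube.2 fun i => ?_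
    have h₁ := mem_cube.1 (hSR hy) i
    have h₂ := mem_cube.1 hx i
    have h₃ : (r (n y) : ℤ) ≤ r N := by exact_mod_cast hr (hn y hy).2.1
    simp only [Pi.zero_apply, sub_zero] at h₁ ⊢
    push_cast
    linarith [abs_sub_abs_le_abs_sub (x i) (y i)]
  calc t * S.card
      ≤ t * (c / t * ∑ x ∈ S.biUnion (fun y => cube y (r (n y))), G x) :=
        mul_le_mul_of_nonneg_left hcover ht.le
    _ ≤ t * (c / t * ∑ x ∈ cube 0 (R + r N), G x) := by
        gcongr
        exact fun x _ _ => hG x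
    _ = c * ∑ x ∈ cube 0 (R + r N), G x := by field_simp

lemma le_of_forall_mul_pow_le {A B : ℝ} (a : ℕ)
    (h : ∀ R : ℕ, A * ((2 * R + 1 : ℕ) : ℝ) ^ d ≤ B * ((2 * (R + a) + 1 : ℕ) : ℝ) ^ d) :
    A ≤ B := by
  have hratio : Tendsto (fun R : ℕ => 2 * (a : ℝ) / (2 * R + 1)) atTop (𝓝 0) :=
    tendsto_const_nhds.div_atTop <| tendsto_atTop_add_const_right _ 1 <|
      tendsto_natCast_atTop_atTop.const_mul_atTop two_pos
  have hlim : Tendsto (fun R : ℕ => B * (1 + 2 * (a : ℝ) / (2 * R + 1)) ^ d) atTop (𝓝 B) := by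
    simpa using (((tendsto_const_nhds (x := (1 : ℝ))).add hratio).pow d).const_mul B
  refine ge_of_tendsto' hlim fun R => ?_
  have hR : (0 : ℝ) < 2 * R + 1 := by positivity
  have hR' : (1 + 2 * (a : ℝ) / (2 * R + 1)) = (2 * (R + a) + 1) / (2 * R + 1) := by
    field_simp; ring
  rw [hR', div_pow, mul_div_assoc', le_div_iff₀ (by positivity)]
  exact_mod_cast h R

end Cubes

section Maximal

variable {d : ℕ} {Ω : Type*} {τ : (Fin d → ℤ) → Ω → Ω}

lemma sum_cube_comp_eq (hτ_add : ∀ z w, τ (z + w) = τ z ∘ τ w) (g : Ω → ℝ) (y : Fin d → ℤ)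
    (m : ℕ) (ω : Ω) : ∑ x ∈ cube y m, g (τ x ω) = ∑ x ∈ cube 0 m, g (τ x (τ y ω)) := by
  simp [cube_eq_map y m, add_comm y, hτ_add]

lemma mul_sum_indicator_le_sum_cube (hτ_add : ∀ z w, τ (z + w) = τ z ∘ τ w) {g : Ω → ℝ}
    (hg₀ : 0 ≤ g) {r : ℕ → ℕ} (hr : Monotone r) {c : ℝ}
    (hc : ∀ n, 1 ≤ n → ((cube (0 : Fin d → ℤ) (3 * r n)).card : ℝ) ≤ c * n ^ d)
    {t : ℝ} (ht : 0 < t) (N R : ℕ) (ω : Ω) :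
    t * ∑ y ∈ cube 0 R, {ω' | ∃ n, 1 ≤ n ∧ n ≤ N ∧
        t * n ^ d < ∑ x ∈ cube 0 (r n), g (τ x ω')}.indicator 1 (τ y ω)
      ≤ c * ∑ x ∈ cube 0 (R + r N), g (τ x ω) := by
  classical
  simp only [Set.indicator_apply, Pi.one_apply, Finset.sum_boole]
  refine mul_card_le_sum_cube (G := fun x => g (τ x ω)) (fun x => hg₀ _) hr hc ht
    (Finset.filter_subset _ _) fun y hy => ?_
  obtain ⟨n, hn₁, hnN, hlt⟩ := (Finset.mem_filter.1 hy).2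
  exact ⟨n, hn₁, hnN, (sum_cube_comp_eq hτ_add g y (r n) ω).symm ▸ hlt⟩

variable [MeasurableSpace Ω] {Q : Measure Ω}

lemma integral_sum_comp_eq_card_mul {ι : Type*} {σ : ι → Ω → Ω}
    (hσ : ∀ z, MeasurePreserving (σ z) Q Q) {f : Ω → ℝ} (hf : Integrable f Q) (s : Finset ι) :
    ∫ ω, ∑ x ∈ s, f (σ x ω) ∂Q = s.card * ∫ ω, f ω ∂Q := by
  have h : ∀ x, ∫ ω, f (σ x ω) ∂Q = ∫ ω, f ω ∂Q := fun x => by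
    rw [← integral_map (hσ x).measurable.aemeasurable
      (by rw [(hσ x).map_eq]; exact hf.aestronglyMeasurable), (hσ x).map_eq]
  rw [integral_finsetSum (f := fun x ω => f (σ x ω)) s
    fun x _ => (hσ x).integrable_comp_of_integrable hf]
  simp [h]

/-- Wiener's maximal inequality for cube averages along a measure-preserving `ℤᵈ`-action. -/
theorem measure_exists_lt_sum_cube_le [IsFiniteMeasure Q]
    (hτ_add : ∀ z w, τ (z + w) = τ z ∘ τ w) (hτ : ∀ z, MeasurePreserving (τ z) Q Q)
    {g : Ω → ℝ} (hg : Measurable g) (hg₀ : 0 ≤ g) (hgi : Integrable g Q)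
    {r : ℕ → ℕ} (hr : Monotone r) {c : ℝ}
    (hc : ∀ n, 1 ≤ n → ((cube (0 : Fin d → ℤ) (3 * r n)).card : ℝ) ≤ c * n ^ d)
    {t : ℝ} (ht : 0 < t) :
    Q {ω | ∃ n, 1 ≤ n ∧ t * n ^ d < ∑ x ∈ cube 0 (r n), g (τ x ω)}
      ≤ ENNReal.ofReal (c * (∫ ω, g ω ∂Q) / t) := by
  set E : ℕ → Set Ω := fun N =>
    {ω | ∃ n, 1 ≤ n ∧ n ≤ N ∧ t * n ^ d < ∑ x ∈ cube 0 (r n), g (τ x ω)}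
  have hE : ∀ N, MeasurableSet (E N) := fun N => by
    simp only [E, ofPred_exists, ofPred_and]
    exact .iUnion fun n => (MeasurableSet.const _).inter <| (MeasurableSet.const _).inter <|
      measurableSet_lt measurable_const
        (Finset.measurable_sum _ fun x _ => hg.comp (hτ x).measurable)
  have hsum_int : ∀ {f : Ω → ℝ}, Integrable f Q → ∀ s : Finset (Fin d → ℤ),
      Integrable (fun ω => ∑ x ∈ s, f (τ x ω)) Q := fun hf s =>
    integrable_finsetSum (f := fun x ω => _) s fun x _ => (hτ x).integrable_comp_of_integrable hf
  -- Integrating the pointwise covering bound over `Q` and letting `R → ∞`.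
  have hEN : ∀ N, t * Q.real (E N) ≤ c * ∫ ω, g ω ∂Q := fun N =>
    le_of_forall_mul_pow_le (d := d) (r N) fun R => by
      have h1 : Integrable ((E N).indicator 1) Q := (integrable_const (1 : ℝ)).indicator (hE N)
      have := integral_mono ((hsum_int h1 _).const_mul t) ((hsum_int hgi _).const_mul c)
        (mul_sum_indicator_le_sum_cube hτ_add hg₀ hr hc ht N R)
      rw [integral_const_mul, integral_const_mul, integral_sum_comp_eq_card_mul hτ h1,
        integral_sum_comp_eq_card_mul hτ hgi, integral_indicator_one (hE N), card_cube,
        card_cube] at this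
      push_cast at this ⊢
      linarith
  have hunion : {ω | ∃ n, 1 ≤ n ∧ t * n ^ d < ∑ x ∈ cube 0 (r n), g (τ x ω)} = ⋃ N, E N := by
    ext ω
    simp only [E, mem_ofPred_eq, mem_iUnion]
    exact ⟨fun ⟨n, hn, h⟩ => ⟨n, n, hn, le_rfl, h⟩, fun ⟨_, n, hn, _, h⟩ => ⟨n, hn, h⟩⟩
  have hmono : Monotone E := fun N N' h ω ⟨n, hn, hnN, hlt⟩ => ⟨n, hn, hnN.trans h, hlt⟩
  rw [hunion, hmono.measure_iUnion]
  refine iSup_le fun N => ?_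
  rw [← ofReal_measureReal]
  exact ENNReal.ofReal_le_ofReal (by rw [le_div_iff₀ ht]; linarith [hEN N])

end Maximal

section CubeAverage

variable {d : ℕ} {Ω : Type*} {h : ℕ → Ω → ℝ} {B : ℝ}

lemma le_add_indicator_iUnion_lt (hB : ∀ n ω, h n ω ≤ B) (hB₀ : 0 ≤ B) {ε : ℝ} (hε : 0 ≤ ε)
    {N n : ℕ} (hn : N ≤ n) (ω : Ω) :
    h n ω ≤ ε + (⋃ m, ⋃ (_ : N ≤ m), {ω' | ε < h m ω'}).indicator (fun _ => B) ω := by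
  by_cases hεn : ε < h n ω
  · rw [indicator_of_mem (mem_iUnion₂.2 ⟨n, hn, hεn⟩)]
    linarith [hB n ω]
  · linarith [indicator_nonneg (fun _ _ => hB₀) ω (s := ⋃ m, ⋃ (_ : N ≤ m), {ω' | ε < h m ω'})]

variable [MeasurableSpace Ω] {Q : Measure Ω}

lemma tendsto_measureReal_iUnion_lt [IsFiniteMeasure Q] (hm : ∀ n, Measurable (h n))
    (hlim : ∀ᵐ ω ∂Q, Tendsto (fun n => h n ω) atTop (𝓝 0)) {ε : ℝ} (hε : 0 < ε) :
    Tendsto (fun N => Q.real (⋃ m, ⋃ (_ : N ≤ m), {ω | ε < h m ω})) atTop (𝓝 0) := by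
  set C : ℕ → Set Ω := fun N => ⋃ m, ⋃ (_ : N ≤ m), {ω | ε < h m ω}
  have hC_null : Q (⋂ N, C N) = 0 := by
    refine measure_mono_null ?_ (ae_iff.1 hlim)
    intro ω hω hten
    obtain ⟨N, hN⟩ := (hten.eventually (gt_mem_nhds hε)).exists_forall_of_atTop
    obtain ⟨m, hm, hεm⟩ := mem_iUnion₂.1 (mem_iInter.1 hω N)
    exact (lt_asymm (hN m hm) hεm).elim
  have hC_anti : Antitone C := fun N N' h ω hω => by
    obtain ⟨m, hm, hεm⟩ := mem_iUnion₂.1 hω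
    exact mem_iUnion₂.2 ⟨m, h.trans hm, hεm⟩
  have := tendsto_measure_iInter_atTop (fun N => (MeasurableSet.iUnion fun m =>
    .iUnion fun _ => measurableSet_lt measurable_const (hm m)).nullMeasurableSet) hC_anti
    ⟨0, measure_ne_top Q _⟩
  rw [hC_null] at this
  exact (ENNReal.tendsto_toReal ENNReal.zero_ne_top).comp this

variable [IsProbabilityMeasure Q] {τ : (Fin d → ℤ) → Ω → Ω} {r : ℕ → ℕ} {c : ℝ}

lemma ae_eventually_sum_cube_div_le (hτ_add : ∀ z w, τ (z + w) = τ z ∘ τ w)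
    (hτ : ∀ z, MeasurePreserving (τ z) Q Q) (hm : ∀ n, Measurable (h n))
    (h₀ : ∀ n ω, 0 ≤ h n ω) (hB : ∀ n ω, h n ω ≤ B)
    (hlim : ∀ᵐ ω ∂Q, Tendsto (fun n => h n ω) atTop (𝓝 0)) (hr : Monotone r)
    (hc : ∀ n, 1 ≤ n → ((cube (0 : Fin d → ℤ) (3 * r n)).card : ℝ) ≤ c * n ^ d)
    {δ : ℝ} (hδ : 0 < δ) :
    ∀ᵐ ω ∂Q, ∀ᶠ n in atTop, (∑ x ∈ cube 0 (r n), h n (τ x ω)) / n ^ d ≤ δ := by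
  obtain ⟨ω₀⟩ := nonempty_of_isProbabilityMeasure Q
  have hB₀ : 0 ≤ B := (h₀ 0 ω₀).trans (hB 0 ω₀)
  have hc₀ : 0 < c := zero_lt_one.trans_le (one_le_of_card_cube_le hc)
  set ε := δ / (2 * c)
  have hε : 0 < ε := by positivity
  set C : ℕ → Set Ω := fun N => ⋃ m, ⋃ (_ : N ≤ m), {ω | ε < h m ω}
  -- After time `N`, `h ≤ ε + B · 1_{C N}`, so a large cube average of `h` forces
  -- a large cube average of `B · 1_{C N}`, whose probability the maximal inequality controls.
  have hsub : ∀ N, {ω | ¬ ∀ᶠ n in atTop, (∑ x ∈ cube 0 (r n), h n (τ x ω)) / n ^ d ≤ δ} ⊆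
      {ω | ∃ n, 1 ≤ n ∧
        δ / 2 * n ^ d < ∑ x ∈ cube 0 (r n), (C N).indicator (fun _ => B) (τ x ω)} := by
    intro N ω hω
    obtain ⟨n, hn, hlt⟩ := frequently_atTop.1 (not_eventually.1 hω) (max N 1)
    have hn₁ : 1 ≤ n := (le_max_right _ _).trans hn
    rw [not_le, lt_div_iff₀ (by positivity)] at hlt
    have hcard : ((cube (0 : Fin d → ℤ) (r n)).card : ℝ) ≤ c * n ^ d :=
      le_trans (by exact_mod_cast Finset.card_le_card (cube_mono 0 (by omega))) (hc n hn₁)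
    have hsum := Finset.sum_le_sum fun x (_ : x ∈ cube 0 (r n)) =>
      le_add_indicator_iUnion_lt hB hB₀ hε.le ((le_max_left _ _).trans hn) (τ x ω)
    rw [Finset.sum_add_distrib, Finset.sum_const, nsmul_eq_mul] at hsum
    have hcε : c * n ^ d * ε = δ / 2 * n ^ d := by simp only [ε]; field_simp
    refine ⟨n, hn₁, ?_⟩
    nlinarith [mul_le_mul_of_nonneg_right hcard hε.le]
  have hlimit : Tendsto (fun N => ENNReal.ofReal (c * (Q.real (C N) * B) / (δ / 2))) atTop
      (𝓝 0) := by
    simpa using ENNReal.tendsto_ofReal ((((tendsto_measureReal_iUnion_lt hm hlim hε).mul_const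
      B).const_mul c).div_const (δ / 2))
  rw [ae_iff]
  refine nonpos_iff_eq_zero.1 (ge_of_tendsto' hlimit fun N => (measure_mono (hsub N)).trans ?_)
  have hCm : MeasurableSet (C N) :=
    .iUnion fun m => .iUnion fun _ => measurableSet_lt measurable_const (hm m)
  have := measure_exists_lt_sum_cube_le hτ_add hτ (measurable_const.indicator hCm)
    (fun ω => indicator_nonneg (fun _ _ => hB₀) ω) ((integrable_const B).indicator hCm) hr hc
    (half_pos hδ)
  rwa [integral_indicator_const _ hCm, smul_eq_mul] at this

theorem ae_tendsto_sum_cube_div (hτ_add : ∀ z w, τ (z + w) = τ z ∘ τ w)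
    (hτ : ∀ z, MeasurePreserving (τ z) Q Q) (hm : ∀ n, Measurable (h n))
    (h₀ : ∀ n ω, 0 ≤ h n ω) (hB : ∀ n ω, h n ω ≤ B)
    (hlim : ∀ᵐ ω ∂Q, Tendsto (fun n => h n ω) atTop (𝓝 0)) (hr : Monotone r)
    (hc : ∀ n, 1 ≤ n → ((cube (0 : Fin d → ℤ) (3 * r n)).card : ℝ) ≤ c * n ^ d) :
    ∀ᵐ ω ∂Q, Tendsto (fun n : ℕ => (∑ x ∈ cube 0 (r n), h n (τ x ω)) / n ^ d) atTop (𝓝 0) := by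
  have hδ := ae_all_iff.2 fun k : ℕ =>
    ae_eventually_sum_cube_div_le hτ_add hτ hm h₀ hB hlim hr hc (Nat.one_div_pos_of_nat (n := k))
  filter_upwards [hδ] with ω hω
  refine tendsto_order.2 ⟨fun a ha => Eventually.of_forall fun n =>
    ha.trans_le (div_nonneg (Finset.sum_nonneg fun x _ => h₀ _ _) (by positivity)),
    fun a ha => ?_⟩
  obtain ⟨k, hk⟩ := exists_nat_one_div_lt ha
  exact (hω k).mono fun n hn => hn.trans_lt hk

end CubeAverage

section Rescaling

variable {d : ℕ}

lemma mem_cube_ceil_of_norm_le {x : Fin d → ℤ} {n : ℕ} (hn : 0 < n) {K : ℝ}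
    (h : ‖WithLp.toLp 2 (fun i => (x i : ℝ) / n)‖ ≤ K) : x ∈ cube 0 ⌈K * n⌉₊ := by
  refine mem_cube.2 fun i => ?_
  have hi := (PiLp.norm_apply_le (WithLp.toLp 2 (fun i => (x i : ℝ) / n)) i).trans h
  rw [PiLp.toLp_apply, Real.norm_eq_abs, abs_div, Nat.abs_cast,
    div_le_iff₀ (by exact_mod_cast hn)] at hi
  have : ((|x i| : ℤ) : ℝ) ≤ ⌈K * n⌉₊ := by push_cast; exact hi.trans (Nat.le_ceil _)
  rw [Pi.zero_apply, sub_zero]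
  exact_mod_cast this

lemma card_cube_three_mul_ceil_le {K : ℝ} (hK : 0 ≤ K) {n : ℕ} (hn : 1 ≤ n) :
    ((cube (0 : Fin d → ℤ) (3 * ⌈K * n⌉₊)).card : ℝ) ≤ (6 * K + 7) ^ d * n ^ d := by
  have hceil := Nat.ceil_lt_add_one (by positivity : 0 ≤ K * n)
  have hn' : (1 : ℝ) ≤ n := by exact_mod_cast hn
  rw [card_cube, ← mul_pow]
  push_cast
  gcongr
  nlinarith

lemma tendsto_one_div_mul_tsum_of_le_indicator_mul {A : Set (EuclideanSpace ℝ (Fin d))} {K : ℝ}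
    (hAK : A ⊆ closedBall 0 K) {f φ : ℕ → (Fin d → ℤ) → ℝ} (hf₀ : ∀ n x, 0 ≤ f n x)
    (hφ₀ : ∀ n x, 0 ≤ φ n x)
    (hf : ∀ n x, f n x ≤ A.indicator 1 (WithLp.toLp 2 (fun i => (x i : ℝ) / n)) * φ n x)
    (hφ : Tendsto (fun n : ℕ => (∑ x ∈ cube 0 ⌈K * n⌉₊, φ n x) / n ^ d) atTop (𝓝 0)) :
    Tendsto (fun n : ℕ => 1 / (n : ℝ) ^ d * ∑' x, f n x) atTop (𝓝 0) := by
  refine squeeze_zero' (Eventually.of_forall fun n => mul_nonneg (by positivity)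
    (tsum_nonneg (hf₀ n))) ((eventually_gt_atTop 0).mono fun n hn => ?_) hφ
  have hzero : ∀ x ∉ cube 0 ⌈K * n⌉₊, f n x = 0 := fun x hx => by
    have hA : WithLp.toLp 2 (fun i => (x i : ℝ) / n) ∉ A := fun hA =>
      hx (mem_cube_ceil_of_norm_le hn (by simpa using hAK hA))
    exact le_antisymm ((hf n x).trans_eq (by simp [indicator_of_notMem hA])) (hf₀ n x)
  rw [one_div_mul_eq_div, tsum_eq_sum hzero]
  gcongr with x
  exact (hf n x).trans <| mul_le_of_le_one_left (hφ₀ n x) <|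
    indicator_apply_le' (fun _ => le_rfl) fun _ => zero_le_one

end Rescaling

lemma indicator_one_mul_le_indicator {α : Type*} {s : Set α} {f : α → ℝ} {a : α} {b : ℝ}
    (h : a ∈ s → b ≤ f a) : s.indicator 1 a * b ≤ s.indicator f a := by
  by_cases ha : a ∈ s
  · simpa [indicator_of_mem ha] using h ha
  · simp [indicator_of_notMem ha]

theorem stmt1_general
    (d : ℕ)
    {Ω : Type*} [MeasurableSpace Ω] (Q : Measure Ω) [IsProbabilityMeasure Q]
    (τ : (Fin d → ℤ) → Ω → Ω)
    (hτ_add : ∀ z w, τ (z + w) = τ z ∘ τ w)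
    (hτ_pres : ∀ z, MeasurePreserving (τ z) Q Q)
    {E : Type*} [MetricSpace E] [TopologicalSpace.SeparableSpace E]
    [MeasurableSpace E] [BorelSpace E]
    (T : EuclideanSpace ℝ (Fin d) → E → E)
    (hT_isom : ∀ v, Isometry (T v))
    (Ω₀ : Set Ω) (hΩ₀_meas : MeasurableSet Ω₀)
    (μ : ℕ → Kernel Ω E) (hμ : ∀ n, IsMarkovKernel (μ n))
    (P : Measure E) [IsProbabilityMeasure P]
    (hweak : ∀ᵐ ω ∂Q, ω ∈ Ω₀ → ∀ G : E → ℝ, Continuous G → (∃ M, ∀ z, |G z| ≤ M) →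
      Tendsto (fun n => ∫ z, G z ∂(μ n ω)) atTop (𝓝 (∫ z, G z ∂P))) :
    ∀ K L M : ℝ, 0 < K → 0 < L → 0 < M →
      ∃ Ω' : Set Ω, MeasurableSet Ω' ∧ Q Ω' = 1 ∧
        ∀ ω ∈ Ω', ∀ A : Set (EuclideanSpace ℝ (Fin d)), IsCompact A →
          A ⊆ Metric.closedBall 0 K →
          ∀ G : E → ℝ, (∀ z w, |G z - G w| ≤ L * dist z w) → (∀ z, |G z| ≤ M) →
          Tendsto (fun n : ℕ =>
            (1 / (n : ℝ) ^ d) * ∑' x : Fin d → ℤ,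
              (A.indicator (fun _ => (1 : ℝ)) (WithLp.toLp 2 (fun i => (x i : ℝ) / n)) *
                Ω₀.indicator (fun _ => (1 : ℝ)) (τ x ω)) *
              |(∫ z, G (T (WithLp.toLp 2 (fun i => (x i : ℝ) / n)) z) ∂(μ n (τ x ω))) -
                ∫ z, G (T (WithLp.toLp 2 (fun i => (x i : ℝ) / n)) z) ∂P|)
            atTop (𝓝 0) := by
  intro K L M hK hL hM
  have := nonempty_of_isProbabilityMeasure P
  set e := TopologicalSpace.denseSeq E
  set D : ℕ → Ω → ℝ := fun n =>
    Ω₀.indicator fun ω => lipschitzDiscrepancy e L.toNNReal M (μ n ω) P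
  have hD₀ : ∀ n ω, 0 ≤ D n ω := fun n ω =>
    indicator_nonneg (fun _ _ => lipschitzDiscrepancy_nonneg _ _) ω
  have hD_lim : ∀ᵐ ω ∂Q, Tendsto (fun n => D n ω) atTop (𝓝 0) := by
    filter_upwards [hweak] with ω hω
    by_cases hω₀ : ω ∈ Ω₀
    · simpa only [D, indicator_of_mem hω₀] using tendsto_lipschitzDiscrepancy_of_tendsto_integral
        e _ hM.le fun f => hω hω₀ f f.continuous ⟨‖f‖, f.norm_coe_le_norm⟩
    · simpa only [D, indicator_of_notMem hω₀] using tendsto_const_nhds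
  obtain ⟨Ω', hΩ'ae, hΩ'm, hΩ'⟩ := (ae_tendsto_sum_cube_div hτ_add hτ_pres
    (fun n => (measurable_lipschitzDiscrepancy (μ n) P).indicator hΩ₀_meas) hD₀
    (fun n ω => indicator_apply_le' (fun _ => lipschitzDiscrepancy_le_two_mul hM.le _ _)
      fun _ => by positivity) hD_lim (r := fun n => ⌈K * n⌉₊)
    (fun _ _ hab => Nat.ceil_mono (by gcongr)) fun n hn =>
      card_cube_three_mul_ceil_le hK.le hn).exists_measurable_mem
  refine ⟨Ω', hΩ'm, (prob_compl_eq_zero_iff hΩ'm).1 hΩ'ae, fun ω hω A _ hAK G hGL hGM => ?_⟩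
  have hG : LipschitzWith L.toNNReal G := .of_dist_le_mul fun z w => by
    rw [Real.coe_toNNReal _ hL.le, Real.dist_eq]; exact hGL z w
  refine tendsto_one_div_mul_tsum_of_le_indicator_mul hAK
    (fun n x => mul_nonneg (mul_nonneg (indicator_nonneg (fun _ _ => zero_le_one) _)
      (indicator_nonneg (fun _ _ => zero_le_one) _)) (abs_nonneg _)) (fun n x => hD₀ _ _)
    (fun n x => ?_) (hΩ' ω hω)
  rw [mul_assoc]
  exact mul_le_mul_of_nonneg_left (indicator_one_mul_le_indicator fun _ =>
    abs_integral_sub_integral_le_lipschitzDiscrepancy (TopologicalSpace.denseRange_denseSeq E)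
      (mul_one L.toNNReal ▸ hG.comp (hT_isom _).lipschitz) fun z => hGM _)
    (indicator_nonneg (fun _ _ => zero_le_one) _)

/-- For all `K, L, M > 0` there is a full-measure set `Ω^{K,L,M}` such that
for every `ω` in it, every compact `A` inside the closed ball of radius `K`, and every
`L`-Lipschitz function `G` bounded by `M`, the spatially-averaged `L¹` difference of the
translated expectations vanishes. -/
theorem stmt1
    (d : ℕ) (hd : 1 ≤ d)
    {Ω : Type*} [MeasurableSpace Ω] (Q : Measure Ω) [IsProbabilityMeasure Q]
    (τ : (Fin d → ℤ) → Ω → Ω)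
    (hτ_meas : ∀ z, Measurable (τ z))
    (hτ_zero : τ 0 = id)
    (hτ_add : ∀ z w, τ (z + w) = τ z ∘ τ w)
    (hτ_pres : ∀ z, MeasurePreserving (τ z) Q Q)
    (hτ_erg : ∀ A : Set Ω, MeasurableSet A → (∀ z, τ z ⁻¹' A = A) → Q A = 0 ∨ Q A = 1)
    {E : Type*} [MetricSpace E] [CompleteSpace E] [TopologicalSpace.SeparableSpace E]
    [MeasurableSpace E] [BorelSpace E]
    (T : EuclideanSpace ℝ (Fin d) → E → E)
    (hT_isom : ∀ v, Isometry (T v))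
    (hT_zero : T 0 = id)
    (hT_add : ∀ v w, T (v + w) = T v ∘ T w)
    (Ω₀ : Set Ω) (hΩ₀_meas : MeasurableSet Ω₀) (hΩ₀_pos : 0 < Q Ω₀)
    (μ : ℕ → Kernel Ω E) (hμ : ∀ n, IsMarkovKernel (μ n))
    (P : Measure E) [IsProbabilityMeasure P]
    (hweak : ∀ᵐ ω ∂Q, ω ∈ Ω₀ → ∀ G : E → ℝ, Continuous G → (∃ M, ∀ z, |G z| ≤ M) →
      Tendsto (fun n => ∫ z, G z ∂(μ n ω)) atTop (𝓝 (∫ z, G z ∂P))) :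
    ∀ K L M : ℝ, 0 < K → 0 < L → 0 < M →
      ∃ Ω' : Set Ω, MeasurableSet Ω' ∧ Q Ω' = 1 ∧
        ∀ ω ∈ Ω', ∀ A : Set (EuclideanSpace ℝ (Fin d)), IsCompact A →
          A ⊆ Metric.closedBall 0 K →
          ∀ G : E → ℝ, (∀ z w, |G z - G w| ≤ L * dist z w) → (∀ z, |G z| ≤ M) →
          Tendsto (fun n : ℕ =>
            (1 / (n : ℝ) ^ d) * ∑' x : Fin d → ℤ,
              (A.indicator (fun _ => (1 : ℝ)) (WithLp.toLp 2 (fun i => (x i : ℝ) / n)) *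
                Ω₀.indicator (fun _ => (1 : ℝ)) (τ x ω)) *
              |(∫ z, G (T (WithLp.toLp 2 (fun i => (x i : ℝ) / n)) z) ∂(μ n (τ x ω))) -
                ∫ z, G (T (WithLp.toLp 2 (fun i => (x i : ℝ) / n)) z) ∂P|)
            atTop (𝓝 0) :=
  stmt1_general d Q τ hτ_add hτ_pres T hT_isom Ω₀ hΩ₀_meas μ hμ P hweak
end
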